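/- arXiv:0801.2470 — 17 statements merged into one kernel-verified Lean document; each statement's English description precedes it below -/
import Mathlib

section
/- If R is a local ring with nonzero Jacobson radical, then the product ring R × R is not a VNL ring; specifically, for any nonzero x in J(R), neither (x, 1-x) nor (1-x, x) is von Neumann regular in R × R. -/
/-!
If `x = x * y * x`, then `y * x` is an idempotent lying in the Jacobson radical whenever `x` does,
and such an idempotent vanishes; hence `x = x * (y * x) = 0`. Regularity in `R × R` is checked
componentwise, and for `x ∈ J(R)` both `(x, 1 - x)` and `1 - (x, 1 - x) = (1 - x, x)` have `x` as
a component.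
-/

/-- An element `a` of a ring is (von Neumann) regular if `a = a * x * a` for some `x`. -/
def IsVNRegular {R : Type*} [Ring R] (a : R) : Prop := ∃ x : R, a = a * x * a

/-- A ring is VNL if for every `a`, either `a` or `1 - a` is regular. -/
def IsVNLRing (R : Type*) [Ring R] : Prop :=
  ∀ a : R, IsVNRegular a ∨ IsVNRegular (1 - a)

open Ideal

theorem IsIdempotentElem.eq_zero_of_mem_jacobson_bot {R : Type*} [Ring R] {e : R}
    (he : IsIdempotentElem e) (hJ : e ∈ jacobson (⊥ : Ideal R)) : e = 0 := by
  obtain ⟨z, hz⟩ := mem_jacobson_iff.1 hJ (-1)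
  have hinv : z * (1 - e) = 1 := by
    rw [← sub_eq_zero, ← mem_bot.1 hz]
    noncomm_ring
  calc e = z * (1 - e) * e := by rw [hinv, one_mul]
    _ = 0 := by rw [mul_assoc, sub_mul, one_mul, he.eq, sub_self, mul_zero]

theorem IsVNRegular.eq_zero_of_mem_jacobson_bot {R : Type*} [Ring R] {x : R}
    (hreg : IsVNRegular x) (hx : x ∈ jacobson (⊥ : Ideal R)) : x = 0 := by
  obtain ⟨y, hy⟩ := hreg
  have hidem : IsIdempotentElem (y * x) := by
    calc y * x * (y * x) = y * (x * y * x) := by noncomm_ring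
      _ = y * x := by rw [← hy]
  have hyx : y * x = 0 := hidem.eq_zero_of_mem_jacobson_bot (mul_mem_left _ y hx)
  rw [hy, mul_assoc, hyx, mul_zero]

theorem IsVNRegular.fst {R S : Type*} [Ring R] [Ring S] {a : R × S} (h : IsVNRegular a) :
    IsVNRegular a.1 :=
  let ⟨y, hy⟩ := h; ⟨y.1, congrArg Prod.fst hy⟩

theorem IsVNRegular.snd {R S : Type*} [Ring R] [Ring S] {a : R × S} (h : IsVNRegular a) :
    IsVNRegular a.2 :=
  let ⟨y, hy⟩ := h; ⟨y.2, congrArg Prod.snd hy⟩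

theorem localRing_prod_not_isVNL_general {R : Type*} [Ring R]
    (hJ : Ideal.jacobson (⊥ : Ideal R) ≠ ⊥) :
    ¬ IsVNLRing (R × R) ∧
      ∀ x ∈ Ideal.jacobson (⊥ : Ideal R), x ≠ 0 →
        ¬ IsVNRegular ((x, 1 - x) : R × R) ∧ ¬ IsVNRegular ((1 - x, x) : R × R) := by
  have key : ∀ x ∈ jacobson (⊥ : Ideal R), x ≠ 0 →
      ¬ IsVNRegular ((x, 1 - x) : R × R) ∧ ¬ IsVNRegular ((1 - x, x) : R × R) :=
    fun x hx hx0 =>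
      ⟨fun h => hx0 (h.fst.eq_zero_of_mem_jacobson_bot hx),
        fun h => hx0 (h.snd.eq_zero_of_mem_jacobson_bot hx)⟩
  refine ⟨fun hVNL => ?_, key⟩
  obtain ⟨x, hx, hx0⟩ := Submodule.exists_mem_ne_zero_of_ne_bot hJ
  have hcompl : (1 : R × R) - (x, 1 - x) = (1 - x, x) := by ext <;> simp
  rcases hVNL (x, 1 - x) with h | h
  · exact (key x hx hx0).1 h
  · exact (key x hx hx0).2 (hcompl ▸ h)

/-- If `R` is a local ring with nonzero Jacobson radical, then `R × R` is not VNL;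
specifically for nonzero `x ∈ J(R)`, neither `(x, 1-x)` nor `(1-x, x)` is regular. -/
theorem localRing_prod_not_isVNL {R : Type*} [Ring R] [IsLocalRing R]
    (hJ : Ideal.jacobson (⊥ : Ideal R) ≠ ⊥) :
    ¬ IsVNLRing (R × R) ∧
      ∀ x ∈ Ideal.jacobson (⊥ : Ideal R), x ≠ 0 →
        ¬ IsVNRegular ((x, 1 - x) : R × R) ∧ ¬ IsVNRegular ((1 - x, x) : R × R) :=
  localRing_prod_not_isVNL_general hJ
end

section
/- If R is a VNL ring, then the center Z(R) of R is also a VNL ring. -/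
def IsGroupInverse {S : Type*} [Mul S] (x z : S) : Prop :=
  x * z * x = x ∧ z * x * z = z ∧ Commute x z

section Semigroup

variable {S : Type*} [Semigroup S] {x y z a : S}

theorem Commute.isGroupInverse_mul_mul (hxy : Commute x y) (hx : x * y * x = x) :
    IsGroupInverse x (y * x * y) := by
  refine ⟨?_, ?_, (hxy.mul_right (Commute.refl x)).mul_right hxy⟩
  · calc x * (y * x * y) * x = x * y * x * (y * x) := by simp only [mul_assoc]
      _ = x := by rw [hx, ← mul_assoc, hx]
  · calc y * x * y * x * (y * x * y) = y * (x * y * x) * (y * x * y) := by simp only [mul_assoc]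
      _ = y * x * (y * x * y) := by rw [hx]
      _ = y * (x * y * x) * y := by simp only [mul_assoc]
      _ = y * x * y := by rw [hx]

theorem IsGroupInverse.commute_of_commute (hz : IsGroupInverse x z) (ha : Commute a x) :
    Commute a z := by
  obtain ⟨hxzx, hzxz, hxz⟩ := hz
  have hzzx : z * z * x = z := by rw [mul_assoc, ← hxz.eq, ← mul_assoc, hzxz]
  have hxxz : x * x * z = x := by rw [mul_assoc, hxz.eq, ← mul_assoc, hxzx]
  have hxzz : x * z * z = z := by rw [hxz.eq, hzxz]
  have hzxx : z * x * x = x := by rw [← hxz.eq, hxzx]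
  -- Both `a * z` and `z * a` are fixed by left multiplication with the idempotent `z * x`.
  have haz : a * z = z * x * (a * z) := calc
    a * z = a * (x * (z * z)) := by rw [← mul_assoc x, hxzz]
    _ = x * (a * (z * z)) := ha.left_comm _
    _ = z * x * x * (a * (z * z)) := by rw [hzxx]
    _ = z * x * (x * (a * (z * z))) := mul_assoc _ _ _
    _ = z * x * (a * (x * (z * z))) := by rw [ha.left_comm]
    _ = z * x * (a * z) := by rw [← mul_assoc x, hxzz]
  have hza : z * a = z * x * (a * z) := calc
    z * a = z * z * x * a := by rw [hzzx]
    _ = z * z * (a * x) := by rw [mul_assoc, ha.eq]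
    _ = z * z * (a * (x * x * z)) := by rw [hxxz]
    _ = z * z * (x * (a * (x * z))) := by rw [mul_assoc x, ha.left_comm]
    _ = z * z * x * (a * (x * z)) := (mul_assoc _ _ _).symm
    _ = z * (x * (a * z)) := by rw [hzzx, ha.left_comm]
    _ = z * x * (a * z) := (mul_assoc _ _ _).symm
  exact haz.trans hza.symm

theorem IsGroupInverse.mem_center (hz : IsGroupInverse x z) (hx : x ∈ Set.center S) :
    z ∈ Set.center S :=
  Semigroup.mem_center_iff.2 fun g => hz.commute_of_commute (Semigroup.mem_center_iff.1 hx g)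

end Semigroup

theorem IsVNRegular.of_coe_center {R : Type*} [Ring R] {a : Subring.center R}
    (ha : IsVNRegular (a : R)) : IsVNRegular a := by
  obtain ⟨y, hy⟩ := ha
  have hz := Commute.isGroupInverse_mul_mul (Semigroup.mem_center_iff.1 a.2 y).symm hy.symm
  exact ⟨⟨_, hz.mem_center a.2⟩, Subtype.ext hz.1.symm⟩

/-- The center of a VNL ring is a VNL ring. -/
theorem center_isVNL_of_isVNL {R : Type*} [Ring R] (h : IsVNLRing R) :
    IsVNLRing (Subring.center R) := fun a =>
  (h a).imp IsVNRegular.of_coe_center fun ha =>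
    IsVNRegular.of_coe_center (by push_cast; exact ha)
end

section
/- If the product ring R × S is VNL, then either R is von Neumann regular or S is von Neumann regular. -/
theorem isVNRegular_prod_mk_iff {R S : Type*} [Ring R] [Ring S] {a : R} {b : S} :
    IsVNRegular (a, b) ↔ IsVNRegular a ∧ IsVNRegular b := by
  constructor
  · rintro ⟨x, hx⟩
    exact ⟨⟨x.1, congrArg Prod.fst hx⟩, ⟨x.2, congrArg Prod.snd hx⟩⟩
  · rintro ⟨⟨x, hx⟩, ⟨y, hy⟩⟩
    exact ⟨(x, y), Prod.ext hx hy⟩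

theorem IsVNLRing.isVNRegular_or_isVNRegular_of_prod {R S : Type*} [Ring R] [Ring S]
    (h : IsVNLRing (R × S)) (a : R) (b : S) : IsVNRegular a ∨ IsVNRegular b := by
  have hsub : (1 : R × S) - (a, 1 - b) = (1 - a, b) := Prod.ext rfl (sub_sub_cancel 1 b)
  rcases h (a, 1 - b) with hab | hab
  · exact Or.inl (isVNRegular_prod_mk_iff.mp hab).1
  · rw [hsub] at hab
    exact Or.inr (isVNRegular_prod_mk_iff.mp hab).2

/-- If `R × S` is VNL, then `R` or `S` is von Neumann regular. -/
theorem regular_or_regular_of_prod_isVNL {R S : Type*} [Ring R] [Ring S]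
    (h : IsVNLRing (R × S)) :
    (∀ a : R, IsVNRegular a) ∨ (∀ b : S, IsVNRegular b) := by
  by_contra! hc
  obtain ⟨⟨a, ha⟩, ⟨b, hb⟩⟩ := hc
  exact (h.isVNRegular_or_isVNRegular_of_prod a b).elim ha hb
end

section
/- If R is a VNL ring and e is an idempotent of R, then either the corner ring eRe or the corner ring (1-e)R(1-e) is von Neumann regular. -/
namespace IsIdempotentElem

variable {R : Type*} [Ring R] {e a : R}

lemma mul_eq_of_eq_corner (he : IsIdempotentElem e) (ha : a = e * a * e) : e * a = a := by
  rw [ha, ← mul_assoc, ← mul_assoc, he.eq]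

lemma mul_eq_of_eq_corner' (he : IsIdempotentElem e) (ha : a = e * a * e) : a * e = a := by
  rw [ha, mul_assoc, he.eq]

lemma mul_eq_zero_of_eq_one_sub_corner (he : IsIdempotentElem e)
    (ha : a = (1 - e) * a * (1 - e)) : e * a = 0 := by
  rw [← he.one_sub.mul_eq_of_eq_corner ha, ← mul_assoc, he.mul_one_sub_self, zero_mul]

lemma mul_eq_zero_of_eq_one_sub_corner' (he : IsIdempotentElem e)
    (ha : a = (1 - e) * a * (1 - e)) : a * e = 0 := by
  rw [← he.one_sub.mul_eq_of_eq_corner' ha, mul_assoc, he.one_sub_mul_self, mul_zero]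

end IsIdempotentElem

lemma IsVNRegular.exists_corner_of_commute {R : Type*} [Ring R] {e c : R}
    (hc : IsVNRegular c) (he : IsIdempotentElem e) (hec : Commute e c) :
    ∃ x : R, e * c = e * c * (e * x * e) * (e * c) := by
  obtain ⟨x, hx⟩ := hc
  refine ⟨x, ?_⟩
  have hece : e * c * e = e * c := by rw [mul_assoc, ← hec.eq, ← mul_assoc, he.eq]
  have heec : e * (e * c) = e * c := by rw [← mul_assoc, he.eq]
  calc e * c = e * c * e := hece.symm
    _ = e * (c * x * c) * e := by rw [← hx]
    _ = e * c * x * (c * e) := by simp only [mul_assoc]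
    _ = e * c * x * (e * c) := by rw [hec.eq]
    _ = e * c * e * x * (e * (e * c)) := by rw [hece, heec]
    _ = e * c * (e * x * e) * (e * c) := by simp only [mul_assoc]

/-- In a VNL ring, for every idempotent `e`, one of the corner rings `eRe` and
`(1-e)R(1-e)` is von Neumann regular (regularity of `a ∈ eRe` in the corner ring means
`a = a * z * a` for some `z ∈ eRe`). -/
theorem corner_regular_or_corner_regular {R : Type*} [Ring R] (h : IsVNLRing R)
    {e : R} (he : IsIdempotentElem e) :
    (∀ a : R, a = e * a * e → ∃ x : R, a = a * (e * x * e) * a) ∨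
    (∀ a : R, a = (1 - e) * a * (1 - e) → ∃ x : R, a = a * ((1 - e) * x * (1 - e)) * a) := by
  by_contra! hc
  obtain ⟨⟨a, ha, hna⟩, ⟨b, hb, hnb⟩⟩ := hc
  set c := a + (1 - e) - b with hc_def
  have hec : e * c = a := by
    rw [mul_sub, mul_add, he.mul_eq_of_eq_corner ha, he.mul_one_sub_self,
      he.mul_eq_zero_of_eq_one_sub_corner hb, add_zero, sub_zero]
  have hce : c * e = a := by
    rw [sub_mul, add_mul, he.mul_eq_of_eq_corner' ha, he.one_sub_mul_self,
      he.mul_eq_zero_of_eq_one_sub_corner' hb, add_zero, sub_zero]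
  have hcomm : Commute e c := hec.trans hce.symm
  have hfc : (1 - e) * (1 - c) = b := by
    rw [mul_sub, mul_one, sub_mul, one_mul, hec, hc_def]
    abel
  rcases h c with hreg | hreg
  · obtain ⟨x, hx⟩ := hreg.exists_corner_of_commute he hcomm
    exact hna x (by rwa [hec] at hx)
  · obtain ⟨x, hx⟩ := hreg.exists_corner_of_commute he.one_sub
      ((Commute.one_left _).sub_left ((Commute.one_right e).sub_right hcomm))
    exact hnb x (by rwa [hfc] at hx)
end

section
/- For a ring R and n > 1, the matrix ring M_n(R) is VNL if and only if R is von Neumann regular. -/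
namespace Matrix

variable {R : Type*} [Ring R] {m n : Type*} [Fintype m] [Fintype n]

def HasInnerInverse (X : Matrix m n R) : Prop := ∃ Y : Matrix n m R, X * Y * X = X

theorem hasInnerInverse_zero : (0 : Matrix m n R).HasInnerInverse := ⟨0, by simp⟩

/-- Expanding `(X - XYX) W (X - XYX) = X - XYX` exhibits the inner inverse
`Y + W - YXW - WXY + YXWXY` of `X`. -/
theorem HasInnerInverse.of_sub_mul_mul {X : Matrix m n R} (Y : Matrix n m R)
    (h : (X - X * Y * X).HasInnerInverse) : X.HasInnerInverse := by
  obtain ⟨W, hW⟩ := h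
  refine ⟨Y + W - Y * X * W - W * X * Y + Y * X * W * X * Y, ?_⟩
  simp only [Matrix.mul_add, Matrix.add_mul, Matrix.mul_sub, Matrix.sub_mul,
    Matrix.mul_assoc] at hW ⊢
  rw [← sub_eq_zero] at hW ⊢
  convert hW using 1
  abel

theorem hasInnerInverse_of_elimination {ι : Type*} [Finite ι]
    (zeroAt : ι → Matrix m n R → Prop) (hzero : ∀ X, (∀ i, zeroAt i X) → X = 0)
    (hstep : ∀ X i, ∃ Y : Matrix n m R, zeroAt i (X - X * Y * X) ∧
      ∀ k, zeroAt k X → zeroAt k (X - X * Y * X))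
    (X : Matrix m n R) : X.HasInnerInverse := by
  classical
  have := Fintype.ofFinite ι
  suffices ∀ s : Finset ι, ∀ X, (∀ i ∉ s, zeroAt i X) → X.HasInnerInverse from
    this Finset.univ X (by simp)
  intro s
  induction s using Finset.induction_on with
  | empty =>
    exact fun X hX => hzero X (fun i => hX i (Finset.notMem_empty i)) ▸ hasInnerInverse_zero
  | insert a s _ ih =>
    intro X hX
    obtain ⟨Y, ha, hk⟩ := hstep X a
    refine .of_sub_mul_mul Y (ih _ fun i hi => ?_)
    by_cases h : i = a
    · exact h ▸ ha
    · exact hk i (hX i (by simp [h, hi]))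

theorem hasInnerInverse_of_forall_row [DecidableEq m]
    (hrow : ∀ r : Matrix Unit n R, r.HasInnerInverse) (X : Matrix m n R) :
    X.HasInnerInverse := by
  refine hasInnerInverse_of_elimination (fun i X => X i = 0) (fun X hX => funext hX)
    (fun X i => ?_) X
  obtain ⟨V, hV⟩ := hrow (replicateRow Unit (X i))
  have hsub : ∀ k, (X - X * (V * single () i (1 : R)) * X) k
      = X k - (∑ j, X k j * V j ()) • X i := by
    intro k
    ext l
    simp [Matrix.mul_apply, Matrix.single_apply, Finset.sum_mul]
  refine ⟨V * single () i (1 : R), ?_, fun k hk => ?_⟩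
  · rw [hsub, sub_eq_zero]
    ext l
    simpa [Matrix.mul_apply] using (congrFun (congrFun hV ()) l).symm
  · simp [hsub, hk]

theorem hasInnerInverse_of_forall_col [DecidableEq n]
    (hcol : ∀ c : Matrix m Unit R, c.HasInnerInverse) (X : Matrix m n R) :
    X.HasInnerInverse := by
  refine hasInnerInverse_of_elimination (fun j X => Xᵀ j = 0)
    (fun X hX => transpose_eq_zero.mp (funext hX)) (fun X j => ?_) X
  obtain ⟨U, hU⟩ := hcol (replicateCol Unit (Xᵀ j))
  have hsub : ∀ l, (X - X * (single j () (1 : R) * U) * X)ᵀ l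
      = fun k => X k l - X k j * ∑ p, U () p * X p l := by
    intro l
    ext k
    simp [Matrix.mul_apply, Matrix.single_apply, Finset.mul_sum, mul_assoc]
  refine ⟨single j () (1 : R) * U, ?_, fun l hl => ?_⟩
  · rw [hsub]
    ext k
    simpa [Matrix.mul_apply, sub_eq_zero, Finset.mul_sum, mul_assoc]
      using (congrFun (congrFun hU k) ()).symm
  · rw [hsub]
    ext k
    simp [show ∀ p, X p l = 0 from congrFun hl]

theorem hasInnerInverse_of_forall_isVNRegular (hR : ∀ a : R, IsVNRegular a)
    (X : Matrix m n R) : X.HasInnerInverse := by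
  classical
  have hscalar (a : Matrix Unit Unit R) : a.HasInnerInverse := by
    obtain ⟨x, hx⟩ := hR (a () ())
    exact ⟨of fun _ _ => x, by ext; simpa [mul_apply] using hx.symm⟩
  exact hasInnerInverse_of_forall_row (hasInnerInverse_of_forall_col hscalar) X

theorem isVNRegular_of_forall_isVNRegular [DecidableEq n] (hR : ∀ a : R, IsVNRegular a)
    (X : Matrix n n R) : IsVNRegular X :=
  let ⟨Y, hY⟩ := hasInnerInverse_of_forall_isVNRegular hR X
  ⟨Y, hY.symm⟩

end Matrix

open Matrix

theorem IsVNRegular.of_diagonal {R n : Type*} [Ring R] [Fintype n] [DecidableEq n]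
    {d : n → R} (h : IsVNRegular (diagonal d)) (i : n) : IsVNRegular (d i) :=
  let ⟨X, hX⟩ := h
  ⟨X i i, by simpa [mul_assoc] using congrFun (congrFun hX i) i⟩

theorem forall_isVNRegular_of_isVNLRing_matrix {R n : Type*} [Ring R] [Fintype n]
    [DecidableEq n] {i j : n} (hij : i ≠ j) (h : IsVNLRing (Matrix n n R)) (a : R) :
    IsVNRegular a := by
  let d : n → R := Pi.single i a + Pi.single j (1 - a)
  rcases h (diagonal d) with hd | hd
  · simpa [d, hij.symm] using hd.of_diagonal i
  · rw [← diagonal_one, diagonal_sub] at hd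
    simpa [d, hij] using hd.of_diagonal j

/-- For `n > 1`, the matrix ring `Mₙ(R)` is VNL iff `R` is von Neumann regular. -/
theorem matrix_isVNL_iff_regular {R : Type*} [Ring R] {n : ℕ} (hn : 1 < n) :
    IsVNLRing (Matrix (Fin n) (Fin n) R) ↔ ∀ a : R, IsVNRegular a :=
  ⟨forall_isVNRegular_of_isVNLRing_matrix (i := ⟨0, by omega⟩) (j := ⟨1, hn⟩)
      (by simp [Fin.ext_iff]),
    fun hR A => .inl (isVNRegular_of_forall_isVNRegular hR A)⟩
end

section
/- Let R and S be rings and M an (R,S)-bimodule, and let T be the formal triangular matrix ring with entries (R, M; 0, S). An element (a, m; 0, b) of T is regular in T if and only if there exist idempotents e in R and f in S such that aR = eR, Sb = Sf, and (1-e)m(1-f) = 0. -/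
/-- The formal triangular matrix ring `(R, M; 0, S)`: elements are triples `(a, m, b)`. -/
@[ext]
structure Tri (R M S : Type*) where
  a : R
  m : M
  b : S

namespace Tri

set_option linter.unusedSectionVars false

variable {R M S : Type*} [Ring R] [Ring S] [AddCommGroup M]
  [Module R M] [Module Sᵐᵒᵖ M] [SMulCommClass R Sᵐᵒᵖ M]

instance : Add (Tri R M S) := ⟨fun x y => ⟨x.a + y.a, x.m + y.m, x.b + y.b⟩⟩
instance : Zero (Tri R M S) := ⟨⟨0, 0, 0⟩⟩
instance : Neg (Tri R M S) := ⟨fun x => ⟨-x.a, -x.m, -x.b⟩⟩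
instance : One (Tri R M S) := ⟨⟨1, 0, 1⟩⟩
instance : Mul (Tri R M S) :=
  ⟨fun x y => ⟨x.a * y.a, x.a • y.m + MulOpposite.op y.b • x.m, x.b * y.b⟩⟩

@[simp] lemma add_a (x y : Tri R M S) : (x + y).a = x.a + y.a := rfl
@[simp] lemma add_m (x y : Tri R M S) : (x + y).m = x.m + y.m := rfl
@[simp] lemma add_b (x y : Tri R M S) : (x + y).b = x.b + y.b := rfl
@[simp] lemma zero_a : (0 : Tri R M S).a = 0 := rfl
@[simp] lemma zero_m : (0 : Tri R M S).m = 0 := rfl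
@[simp] lemma zero_b : (0 : Tri R M S).b = 0 := rfl
@[simp] lemma neg_a (x : Tri R M S) : (-x).a = -x.a := rfl
@[simp] lemma neg_m (x : Tri R M S) : (-x).m = -x.m := rfl
@[simp] lemma neg_b (x : Tri R M S) : (-x).b = -x.b := rfl
@[simp] lemma one_a : (1 : Tri R M S).a = 1 := rfl
@[simp] lemma one_m : (1 : Tri R M S).m = 0 := rfl
@[simp] lemma one_b : (1 : Tri R M S).b = 1 := rfl
@[simp] lemma mul_a (x y : Tri R M S) : (x * y).a = x.a * y.a := rfl
@[simp] lemma mul_m (x y : Tri R M S) :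
    (x * y).m = x.a • y.m + MulOpposite.op y.b • x.m := rfl
@[simp] lemma mul_b (x y : Tri R M S) : (x * y).b = x.b * y.b := rfl

instance : Sub (Tri R M S) := ⟨fun x y => ⟨x.a - y.a, x.m - y.m, x.b - y.b⟩⟩
instance : SMul ℕ (Tri R M S) := ⟨fun n x => ⟨n • x.a, n • x.m, n • x.b⟩⟩
instance : SMul ℤ (Tri R M S) := ⟨fun n x => ⟨n • x.a, n • x.m, n • x.b⟩⟩

/-- The underlying triple. -/
def toProd (x : Tri R M S) : R × M × S := (x.a, x.m, x.b)

lemma toProd_injective : Function.Injective (toProd : Tri R M S → R × M × S) := by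
  rintro ⟨a, m, b⟩ ⟨a', m', b'⟩ h
  simpa [toProd, Tri.mk.injEq, Prod.ext_iff] using h

instance : AddCommGroup (Tri R M S) :=
  toProd_injective.addCommGroup toProd rfl (fun _ _ => rfl) (fun _ => rfl)
    (fun _ _ => rfl) (fun _ _ => rfl) (fun _ _ => rfl)

instance : Ring (Tri R M S) where
  __ := (inferInstance : AddCommGroup (Tri R M S))
  mul x y := x * y
  mul_assoc x y z := by
    ext
    · simp [mul_assoc]
    · simp only [mul_m, mul_a, mul_b, smul_add, mul_smul, MulOpposite.op_mul]
      rw [smul_comm x.a (MulOpposite.op z.b) y.m]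
      abel
    · simp [mul_assoc]
  one := 1
  one_mul x := by ext <;> simp
  mul_one x := by ext <;> simp
  left_distrib x y z := by
    ext <;> simp [mul_add, smul_add, add_smul] <;> abel
  right_distrib x y z := by
    ext <;> simp [add_mul, add_smul, smul_add] <;> abel
  zero_mul x := by ext <;> simp
  mul_zero x := by ext <;> simp

end Tri

/-!
If `u` is an inner inverse of `t = (a, m; 0, b)`, then `e = a u₁₁` and `f = u₂₂ b` are
idempotents with `aR = eR` and `Sb = Sf`, and the corner of `t u t = t` reads
`m = e m + a u₁₂ b + m f`; the map `m ↦ (1 - e) m (1 - f)` kills all three summands since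
`(1 - e) e = 0`, `(1 - e) a = 0` and `f (1 - f) = 0`. Conversely, pick `x`, `y` with
`a x = e`, `y b = f`; then `(x, -x m y; 0, y)` is an inner inverse of `t`, because
`(1 - e) m (1 - f) = 0` says exactly `m = e m + m f - e m f`.
-/

open MulOpposite

section Semigroup

variable {R : Type*} [Semigroup R] {a x : R}

theorem isIdempotentElem_mul_of_mul_mul_self (h : a * x * a = a) :
    IsIdempotentElem (a * x) := by
  rw [IsIdempotentElem, ← mul_assoc, h]

theorem isIdempotentElem_mul_of_mul_mul_self' (h : a * x * a = a) :
    IsIdempotentElem (x * a) := by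
  rw [IsIdempotentElem, mul_assoc, ← mul_assoc a, h]

end Semigroup

section Monoid

variable {R : Type*} [Monoid R] {a e : R}

theorem range_mul_left_eq_iff (he : IsIdempotentElem e) :
    Set.range (a * ·) = Set.range (e * ·) ↔ e * a = a ∧ ∃ x, a * x = e := by
  constructor
  · intro h
    obtain ⟨r, rfl⟩ : a ∈ Set.range (e * ·) := by rw [← h]; exact ⟨1, mul_one a⟩
    refine ⟨by rw [← mul_assoc, he.eq], ?_⟩
    change e ∈ Set.range _
    rw [h]
    exact ⟨1, mul_one e⟩
  · rintro ⟨hea, x, hx⟩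
    refine Set.Subset.antisymm ?_ ?_ <;> rintro _ ⟨r, rfl⟩
    · exact ⟨a * r, by simp only [← mul_assoc, hea]⟩
    · exact ⟨x * r, by simp only [← mul_assoc, hx]⟩

theorem range_mul_right_eq_iff (he : IsIdempotentElem e) :
    Set.range (· * a) = Set.range (· * e) ↔ a * e = a ∧ ∃ x, x * a = e := by
  constructor
  · intro h
    obtain ⟨r, rfl⟩ : a ∈ Set.range (· * e) := by rw [← h]; exact ⟨1, one_mul a⟩
    refine ⟨by rw [mul_assoc, he.eq], ?_⟩
    change e ∈ Set.range _
    rw [h]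
    exact ⟨1, one_mul e⟩
  · rintro ⟨hae, x, hx⟩
    refine Set.Subset.antisymm ?_ ?_ <;> rintro _ ⟨r, rfl⟩
    · exact ⟨r * a, by simp only [mul_assoc, hae]⟩
    · exact ⟨r * x, by simp only [mul_assoc, hx]⟩

end Monoid

section Bimodule

variable {R S M : Type*} [Ring R] [Ring S] [AddCommGroup M] [Module R M] [Module Sᵐᵒᵖ M]

theorem one_sub_smul_op_one_sub_smul (e : R) (f : S) (m : M) :
    (1 - e) • (op (1 - f) • m) = m - e • m - op f • m + e • (op f • m) := by
  rw [op_sub, op_one, sub_smul, one_smul, sub_smul, one_smul, smul_sub]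
  abel

theorem one_sub_smul_op_one_sub_smul_op_smul {f s : S} (h : s * (1 - f) = 0) (e : R) (m : M) :
    (1 - e) • (op (1 - f) • (op s • m)) = 0 := by
  rw [smul_smul, ← op_mul, h, op_zero, zero_smul, smul_zero]

theorem one_sub_smul_op_one_sub_smul_smul [SMulCommClass R Sᵐᵒᵖ M] {e r : R}
    (h : (1 - e) * r = 0) (f : S) (m : M) :
    (1 - e) • (op (1 - f) • (r • m)) = 0 := by
  rw [smul_comm, smul_smul, h, zero_smul, smul_zero]

end Bimodule

namespace Tri

variable {R M S : Type*} [Ring R] [Ring S] [AddCommGroup M]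
  [Module R M] [Module Sᵐᵒᵖ M] [SMulCommClass R Sᵐᵒᵖ M]

theorem mul_mul_m (x y z : Tri R M S) :
    (x * y * z).m = (x.a * y.a) • z.m + x.a • (op z.b • y.m) + op (y.b * z.b) • x.m := by
  simp only [mul_m, mul_a, smul_add, op_mul, mul_smul]
  rw [← smul_comm x.a (op z.b), add_assoc]

variable {t : Tri R M S}

theorem one_sub_smul_op_one_sub_smul_m_eq_zero {u : Tri R M S} (hu : t * u * t = t) :
    (1 - t.a * u.a) • (op (1 - u.b * t.b) • t.m) = 0 := by
  have ha : (1 - t.a * u.a) * t.a = 0 := by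
    rw [sub_mul, one_mul, ← mul_a, ← mul_a, hu, sub_self]
  have hb : t.b * (1 - u.b * t.b) = 0 := by
    rw [mul_sub, mul_one, ← mul_assoc, ← mul_b, ← mul_b, hu, sub_self]
  have he : IsIdempotentElem (t.a * u.a) := isIdempotentElem_mul_of_mul_mul_self congr(($hu).a)
  have hf : IsIdempotentElem (u.b * t.b) := isIdempotentElem_mul_of_mul_mul_self' congr(($hu).b)
  rw [show t.m = (t * u * t).m from congr(($hu).m).symm, mul_mul_m,
    smul_add, smul_add, smul_add, smul_add,
    one_sub_smul_op_one_sub_smul_smul he.one_sub_mul_self,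
    one_sub_smul_op_one_sub_smul_smul ha,
    one_sub_smul_op_one_sub_smul_op_smul hf.mul_one_sub_self, add_zero, add_zero]

theorem mul_mk_mul_self {e x : R} {f y : S}
    (hea : e * t.a = t.a) (hx : t.a * x = e) (hbf : t.b * f = t.b) (hy : y * t.b = f)
    (hc : (1 - e) • (op (1 - f) • t.m) = 0) :
    t * ⟨x, -(x • (op y • t.m)), y⟩ * t = t := by
  rw [one_sub_smul_op_one_sub_smul] at hc
  have hmid : t.a • (op t.b • -(x • (op y • t.m))) = -(e • (op f • t.m)) := by
    rw [smul_neg, smul_neg, ← smul_comm x (op t.b), smul_smul, hx, smul_smul, ← op_mul, hy]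
  ext
  · change t.a * x * t.a = t.a
    rw [hx, hea]
  · rw [mul_mul_m]
    change (t.a * x) • t.m + t.a • (op t.b • -(x • (op y • t.m))) + op (y * t.b) • t.m
      = t.m
    rw [hx, hy, hmid, ← sub_eq_zero, ← neg_eq_zero, ← hc]
    abel
  · change t.b * y * t.b = t.b
    rw [mul_assoc, hy, hbf]

end Tri

/-- Regularity criterion in the formal triangular matrix ring `(R, M; 0, S)`:
`(a, m; 0, b)` is regular iff there are idempotents `e ∈ R`, `f ∈ S` with
`aR = eR`, `Sb = Sf` and `(1-e) m (1-f) = 0`. -/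
theorem tri_isVNRegular_iff {R M S : Type*} [Ring R] [Ring S] [AddCommGroup M]
    [Module R M] [Module Sᵐᵒᵖ M] [SMulCommClass R Sᵐᵒᵖ M] (t : Tri R M S) :
    IsVNRegular t ↔
      ∃ (e : R) (f : S), IsIdempotentElem e ∧ IsIdempotentElem f ∧
        Set.range (fun r : R => t.a * r) = Set.range (fun r : R => e * r) ∧
        Set.range (fun s : S => s * t.b) = Set.range (fun s : S => s * f) ∧
        (1 - e) • (MulOpposite.op (1 - f) • t.m) = 0 := by
  constructor
  · rintro ⟨u, hu⟩
    have ha : t.a * u.a * t.a = t.a := congr(($hu).a).symm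
    have hb : t.b * u.b * t.b = t.b := congr(($hu).b).symm
    have he := isIdempotentElem_mul_of_mul_mul_self ha
    have hf := isIdempotentElem_mul_of_mul_mul_self' hb
    exact ⟨t.a * u.a, u.b * t.b, he, hf, (range_mul_left_eq_iff he).2 ⟨ha, u.a, rfl⟩,
      (range_mul_right_eq_iff hf).2 ⟨by rw [← mul_assoc, hb], u.b, rfl⟩,
      Tri.one_sub_smul_op_one_sub_smul_m_eq_zero hu.symm⟩
  · rintro ⟨e, f, he, hf, hra, hsb, hc⟩
    obtain ⟨hea, x, hx⟩ := (range_mul_left_eq_iff he).1 hra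
    obtain ⟨hbf, y, hy⟩ := (range_mul_right_eq_iff hf).1 hsb
    exact ⟨_, (Tri.mul_mk_mul_self hea hx hbf hy hc).symm⟩
end

section
/- Let R be a regular ring, L a local ring, and M an (R,L)-bimodule. Then every element (r, m; 0, l) of the formal triangular matrix ring (R, M; 0, L) with l a unit of L is regular; consequently the formal triangular matrix ring (R, M; 0, L) is a VNL ring. -/
namespace Tri

variable {R M S : Type*} [Ring R] [Ring S] [AddCommGroup M]
  [Module R M] [Module Sᵐᵒᵖ M] [SMulCommClass R Sᵐᵒᵖ M]

open MulOpposite in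
/-- If `a = a x a` and `v` is a unit, then `(x, -x m v⁻¹; 0, v⁻¹)` is an inner inverse of
`(a, m; 0, v)`: the two correction terms `a x m` in the corner cancel. -/
lemma isVNRegular_of_isUnit_b {t : Tri R M S} (ha : IsVNRegular t.a) (hb : IsUnit t.b) :
    IsVNRegular t := by
  obtain ⟨x, hx⟩ := ha
  obtain ⟨v, hv⟩ := hb
  have cancel (n : M) : op (v : S) • op (↑v⁻¹ : S) • n = n := by
    rw [← mul_smul, ← op_mul, Units.inv_mul, op_one, one_smul]
  refine ⟨⟨x, -(op (↑v⁻¹ : S) • x • t.m), ↑v⁻¹⟩, ?_⟩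
  ext
  · exact hx
  · simp only [mul_m, mul_a, smul_neg, smul_add, mul_smul, ← hv,
      smul_comm t.a (op (↑v⁻¹ : S)), cancel]
    abel
  · simp [← hv]

lemma isVNLRing_of_isLocalRing [IsLocalRing S] (hR : ∀ a : R, IsVNRegular a) :
    IsVNLRing (Tri R M S) := fun t =>
  (IsLocalRing.isUnit_or_isUnit_of_add_one (add_sub_cancel t.b 1)).imp
    (isVNRegular_of_isUnit_b (hR _)) (isVNRegular_of_isUnit_b (hR _))

end Tri

/-- If `R` is regular and `L` is local, then in the formal triangular matrix ring
`(R, M; 0, L)` every element with unit lower-right entry is regular, and the ring is VNL. -/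
theorem tri_regular_local_isVNL {R M L : Type*} [Ring R] [Ring L] [IsLocalRing L]
    [AddCommGroup M] [Module R M] [Module Lᵐᵒᵖ M] [SMulCommClass R Lᵐᵒᵖ M]
    (hR : ∀ a : R, IsVNRegular a) :
    (∀ t : Tri R M L, IsUnit t.b → IsVNRegular t) ∧ IsVNLRing (Tri R M L) :=
  ⟨fun t => Tri.isVNRegular_of_isUnit_b (hR t.a), Tri.isVNLRing_of_isLocalRing hR⟩
end

section
/- Let S = M_n(R) with n ≥ 2 and let M be a nonzero left S-module. Then for every nonzero m in M there exists an idempotent e in S with e*m ≠ 0 and (1-e)*m ≠ 0. In particular, no nonzero module over M_n(R) with n ≥ 2 is partial. -/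
/-!
Write `Eᵢⱼ` for the matrix units. Since `∑ᵢ Eᵢᵢ = 1`, a nonzero `m` has `Eᵢᵢ m ≠ 0` for some `i`.
Either `Eᵢᵢ` already splits `m`, or `Eᵢᵢ m = m`; in the latter case, for `j ≠ i` the idempotent
`e = Eⱼⱼ + Eⱼᵢ` gives `e m = Eⱼᵢ m`, which is nonzero because `Eᵢⱼ Eⱼᵢ m = m`, and
`(1 - e) m = m - Eⱼᵢ m`, which is nonzero because `Eᵢᵢ` kills `Eⱼᵢ m` but fixes `m`.
-/

/-- A module `M` over a ring `A` is partial if for every idempotent `e` of `A`,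
either `eM = 0` or `(1-e)M = 0`. -/
def IsPartialModule (A M : Type*) [Ring A] [AddCommGroup M] [Module A M] : Prop :=
  ∀ e : A, IsIdempotentElem e → (∀ m : M, e • m = 0) ∨ (∀ m : M, (1 - e) • m = 0)

theorem not_isPartialModule_of_forall_exists_isIdempotentElem {A M : Type*} [Ring A]
    [AddCommGroup M] [Module A M] [Nontrivial M]
    (h : ∀ m : M, m ≠ 0 → ∃ e : A, IsIdempotentElem e ∧ e • m ≠ 0 ∧ (1 - e) • m ≠ 0) :
    ¬ IsPartialModule A M := by
  intro hpart
  obtain ⟨m, hm⟩ := exists_ne (0 : M)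
  obtain ⟨e, he, hem, hem'⟩ := h m hm
  rcases hpart e he with hzero | hzero
  exacts [hem (hzero m), hem' (hzero m)]

namespace Matrix

variable {ι R M : Type*} [Fintype ι] [DecidableEq ι]

section Semiring

variable [Semiring R]

theorem isIdempotentElem_single_one (i : ι) : IsIdempotentElem (single i i (1 : R)) := by
  simp [IsIdempotentElem]

theorem isIdempotentElem_single_add_single {i j : ι} (hij : i ≠ j) (c : R) :
    IsIdempotentElem (single j j (1 : R) + single j i c) := by
  rw [IsIdempotentElem, add_mul, mul_add, mul_add, single_mul_single_same, single_mul_single_same,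
    single_mul_single_of_ne (h := hij), single_mul_single_of_ne (h := hij), one_mul, one_mul,
    add_zero, add_zero]

variable [AddCommMonoid M] [Module (Matrix ι ι R) M] {m : M}

theorem exists_single_smul_ne_zero (hm : m ≠ 0) : ∃ i : ι, single i i (1 : R) • m ≠ 0 := by
  by_contra! h
  apply hm
  rw [← one_smul (Matrix ι ι R) m, ← sum_single_one, Finset.sum_smul]
  exact Finset.sum_eq_zero fun i _ => h i

theorem single_smul_ne_zero {i : ι} (j : ι) (h : single i i (1 : R) • m ≠ 0) :
    single j i (1 : R) • m ≠ 0 := by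
  intro hzero
  apply h
  rw [← mul_one (1 : R), ← single_mul_single_same (1 : R) i j i, mul_smul, hzero, smul_zero]

end Semiring

variable [Ring R] [AddCommGroup M] [Module (Matrix ι ι R) M] {m : M}

theorem smul_ne_zero_and_one_sub_smul_ne_zero_of_single_smul_eq_self {i j : ι} (hij : i ≠ j)
    (hm : m ≠ 0) (hfix : single i i (1 : R) • m = m) :
    (single j j (1 : R) + single j i 1) • m ≠ 0 ∧
      (1 - (single j j (1 : R) + single j i 1)) • m ≠ 0 := by
  have hjj : single j j (1 : R) • m = 0 := by
    rw [← hfix, smul_smul, single_mul_single_of_ne (h := hij.symm), zero_smul]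
  have hji : single j i (1 : R) • m ≠ 0 := single_smul_ne_zero j (by rwa [hfix])
  rw [sub_smul, one_smul, add_smul, hjj, zero_add, sub_ne_zero]
  refine ⟨hji, fun hm_eq => hm ?_⟩
  rw [← hfix, hm_eq, smul_smul, single_mul_single_of_ne (h := hij), zero_smul]

theorem exists_isIdempotentElem_smul_ne_zero_and_one_sub_smul_ne_zero [Nontrivial ι]
    (hm : m ≠ 0) :
    ∃ e : Matrix ι ι R, IsIdempotentElem e ∧ e • m ≠ 0 ∧ (1 - e) • m ≠ 0 := by
  obtain ⟨i, hi⟩ := exists_single_smul_ne_zero (ι := ι) (R := R) hm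
  by_cases hsplit : (1 - single i i (1 : R)) • m ≠ 0
  · exact ⟨_, isIdempotentElem_single_one i, hi, hsplit⟩
  · rw [not_not, sub_smul, one_smul, sub_eq_zero] at hsplit
    obtain ⟨j, hji⟩ := exists_ne i
    exact ⟨_, isIdempotentElem_single_add_single hji.symm 1,
      smul_ne_zero_and_one_sub_smul_ne_zero_of_single_smul_eq_self hji.symm hm hsplit.symm⟩

end Matrix

/-- For `S = Mₙ(R)` with `n ≥ 2` and a left `S`-module `M`, every nonzero `m ∈ M`
admits an idempotent `e ∈ S` with `e•m ≠ 0` and `(1-e)•m ≠ 0`; in particular no nonzero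
`S`-module is partial. -/
theorem matrix_module_not_partial {R : Type*} [Ring R] {n : ℕ} (hn : 2 ≤ n)
    (M : Type*) [AddCommGroup M] [Module (Matrix (Fin n) (Fin n) R) M] :
    (∀ m : M, m ≠ 0 →
      ∃ e : Matrix (Fin n) (Fin n) R,
        IsIdempotentElem e ∧ e • m ≠ 0 ∧ (1 - e) • m ≠ 0) ∧
    (Nontrivial M → ¬ IsPartialModule (Matrix (Fin n) (Fin n) R) M) := by
  have : Nontrivial (Fin n) := Fin.nontrivial_iff_two_le.mpr hn
  have split : ∀ m : M, m ≠ 0 →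
      ∃ e : Matrix (Fin n) (Fin n) R, IsIdempotentElem e ∧ e • m ≠ 0 ∧ (1 - e) • m ≠ 0 :=
    fun _ => Matrix.exists_isIdempotentElem_smul_ne_zero_and_one_sub_smul_ne_zero
  exact ⟨split, fun _ => not_isPartialModule_of_forall_exists_isIdempotentElem split⟩
end

section
/- For n ≥ 4 and any nonzero ring R, the ring T_n(R) of upper triangular n×n matrices over R is not VNL. -/
/-- The ring of upper triangular `n × n` matrices over `R`, as a subring of `Mₙ(R)`. -/
def upperTriangularSubring (n : ℕ) (R : Type*) [Ring R] :
    Subring (Matrix (Fin n) (Fin n) R) where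
  carrier := {M | ∀ i j, j < i → M i j = 0}
  zero_mem' := fun _ _ _ => rfl
  one_mem' := fun _ _ h => Matrix.one_apply_ne h.ne'
  add_mem' := fun ha hb i j h => by
    simp [Matrix.add_apply, ha i j h, hb i j h]
  neg_mem' := fun ha i j h => by simp [Matrix.neg_apply, ha i j h]
  mul_mem' := fun {A B} ha hb i j h => by
    rw [Matrix.mul_apply]
    refine Finset.sum_eq_zero fun k _ => ?_
    rcases lt_or_ge k i with hk | hk
    · rw [ha i k hk, zero_mul]
    · rw [hb k j (lt_of_lt_of_le h hk), mul_zero]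

/-! If an idempotent `e` commutes with `s`, regularity of `s` passes to `e * s`. So for `a ∈ eRe`
and `c ∈ (1-e)R(1-e)` in a VNL ring, the element `s = a + (1 - e) - c`, with `e s = a` and
`(1 - e)(1 - s) = c`, shows that `a` or `c` is regular. In `Tₙ(R)` take `e = E_ii + E_jj`,
`a = E_ij` and `c = E_kl` for distinct indices `i < j`, `k < l`: a matrix unit `E_ij` with `i < j`
is never regular there, because `E_ij X E_ij = X_ji E_ij = 0` for upper triangular `X`. -/

theorem IsVNRegular.mul_of_commute {R : Type*} [Ring R] {e s : R} (he : IsIdempotentElem e)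
    (hes : Commute e s) (hs : IsVNRegular s) : IsVNRegular (e * s) := by
  obtain ⟨x, hx⟩ := hs
  refine ⟨x, ?_⟩
  calc e * s = e * s * e := by rw [mul_assoc, ← hes.eq, ← mul_assoc, he.eq]
    _ = e * (s * x * s) * e := by rw [← hx]
    _ = e * s * x * (s * e) := by simp only [mul_assoc]
    _ = e * s * x * (e * s) := by rw [hes.eq]

theorem IsVNLRing.isVNRegular_or_isVNRegular_of_corner {R : Type*} [Ring R] (hR : IsVNLRing R)
    {e a c : R} (he : IsIdempotentElem e) (hea : e * a = a) (hae : a * e = a)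
    (hec : e * c = 0) (hce : c * e = 0) : IsVNRegular a ∨ IsVNRegular c := by
  set s := a + (1 - e) - c
  have hes : e * s = a := by simp [s, mul_add, mul_sub, hea, hec, he.eq]
  have hse : s * e = a := by simp [s, add_mul, sub_mul, hae, hce, he.eq]
  have hcomm : Commute e s := hes.trans hse.symm
  have hc : (1 - e) * (1 - s) = c := by
    rw [sub_mul, one_mul, mul_sub, mul_one, hes]
    simp only [s]
    abel
  have hcomm' : Commute (1 - e) (1 - s) :=
    (Commute.one_left _).sub_left ((Commute.one_right e).sub_right hcomm)
  exact (hR s).imp (fun h => hes ▸ h.mul_of_commute he hcomm)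
    (fun h => hc ▸ h.mul_of_commute he.one_sub hcomm')

section UpperTriangular

variable {R : Type*} [Ring R] {n : ℕ}

theorem single_mem_upperTriangularSubring {i j : Fin n} (hij : i ≤ j) (r : R) :
    Matrix.single i j r ∈ upperTriangularSubring n R :=
  fun _ _ h => Matrix.single_apply_of_ne _ _ _ _ _ (by rintro ⟨rfl, rfl⟩; exact hij.not_gt h)

theorem not_isVNRegular_single {i j : Fin n} (hij : i < j) {r : R} (hr : r ≠ 0) :
    ¬ IsVNRegular (⟨Matrix.single i j r, single_mem_upperTriangularSubring hij.le r⟩ :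
      upperTriangularSubring n R) := by
  rintro ⟨x, hx⟩
  have h := congrArg Subtype.val hx
  rw [Subring.coe_mul, Subring.coe_mul, Matrix.single_mul_mul_single, x.2 j i hij, mul_zero,
    zero_mul] at h
  exact hr (by simpa using congrFun₂ h i j)

theorem upperTriangularSubring_not_isVNLRing [Nontrivial R] {i j k l : Fin n} (hij : i < j)
    (hkl : k < l) (hik : i ≠ k) (hil : i ≠ l) (hjk : j ≠ k) (hjl : j ≠ l) :
    ¬ IsVNLRing (upperTriangularSubring n R) := by
  intro hR
  let E (p q : Fin n) (h : p ≤ q) : upperTriangularSubring n R :=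
    ⟨Matrix.single p q 1, single_mem_upperTriangularSubring h 1⟩
  let e := E i i le_rfl + E j j le_rfl
  refine (hR.isVNRegular_or_isVNRegular_of_corner (e := e) (a := E i j hij.le)
    (c := E k l hkl.le) ?_ ?_ ?_ ?_ ?_).elim (not_isVNRegular_single hij one_ne_zero)
    (not_isVNRegular_single hkl one_ne_zero) <;> ext1 <;>
    simp [e, E, hik, hjk, hil.symm, hjl.symm, hij.ne, hij.ne', add_mul, mul_add]

end UpperTriangular

/-- For `n ≥ 4` and a nonzero ring `R`, the upper triangular matrix ring `Tₙ(R)` is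
not VNL. -/
theorem upperTriangular_not_isVNL {R : Type*} [Ring R] [Nontrivial R] {n : ℕ}
    (hn : 4 ≤ n) : ¬ IsVNLRing (upperTriangularSubring n R) :=
  upperTriangularSubring_not_isVNLRing (i := ⟨0, by omega⟩) (j := ⟨1, by omega⟩)
    (k := ⟨2, by omega⟩) (l := ⟨3, by omega⟩)
    (by simp) (by simp) (by simp) (by simp) (by simp) (by simp)
end

section
/- For a division ring D, the upper triangular matrix ring T_3(D) is a VNL ring. -/
/-!
An upper triangular `3 × 3` matrix over a division ring with at most one zero on its diagonal
is regular: inverting the diagonal entries (with `0⁻¹ = 0`) in the formula for the inverse of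
an invertible upper triangular matrix gives a pseudo-inverse. A diagonal entry `d` and `1 - d`
never vanish together, so the zeros on the diagonals of `a` and of `1 - a` lie in disjoint
subsets of the three diagonal positions, and one of the two has at most one zero.
-/

open Matrix

section UpperTriangularThree

variable {R : Type*} [Ring R]

lemma eq_of_mem_upperTriangularSubring_three {M : Matrix (Fin 3) (Fin 3) R}
    (hM : M ∈ upperTriangularSubring 3 R) :
    M = !![M 0 0, M 0 1, M 0 2; 0, M 1 1, M 1 2; 0, 0, M 2 2] := by
  conv_lhs => rw [eta_fin_three M]
  rw [hM 1 0 (by decide), hM 2 0 (by decide), hM 2 1 (by decide)]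

lemma mem_upperTriangularSubring_three (p q r b c e : R) :
    !![p, b, c; 0, q, e; 0, 0, r] ∈ upperTriangularSubring 3 R := by
  intro i j h
  fin_cases i <;> fin_cases j <;> first | rfl | exact absurd h (by decide)

end UpperTriangularThree

section DivisionRing

variable {D : Type*} [DivisionRing D]

lemma upperTriangular_three_mul_pseudoInverse_mul {p q r b c e : D} (hpq : p = 0 → q ≠ 0)
    (hpr : p = 0 → r ≠ 0) (hqr : q = 0 → r ≠ 0) :
    !![p, b, c; 0, q, e; 0, 0, r] *
        !![p⁻¹, -(p⁻¹ * b * q⁻¹), p⁻¹ * b * q⁻¹ * e * r⁻¹ - p⁻¹ * c * r⁻¹;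
          0, q⁻¹, -(q⁻¹ * e * r⁻¹);
          0, 0, r⁻¹] *
        !![p, b, c; 0, q, e; 0, 0, r] =
      !![p, b, c; 0, q, e; 0, 0, r] := by
  have hdiag : (p ≠ 0 ∨ p = 0) ∧ q ≠ 0 ∧ r ≠ 0 ∨
      p ≠ 0 ∧ (q = 0 ∧ r ≠ 0 ∨ q ≠ 0 ∧ r = 0) := by
    tauto
  simp only [mul_fin_three]
  ext i j
  fin_cases i <;> fin_cases j <;>
    rcases hdiag with ⟨hp | hp, hq, hr⟩ | ⟨hp, ⟨hq, hr⟩ | ⟨hq, hr⟩⟩ <;>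
    simp [hp, hq, hr, mul_assoc, mul_add, add_mul, mul_neg, neg_mul, sub_eq_add_neg, add_assoc]

lemma isVNRegular_of_subsingleton_diag_eq_zero (a : upperTriangularSubring 3 D)
    (ha : {i | (a : Matrix (Fin 3) (Fin 3) D) i i = 0}.Subsingleton) : IsVNRegular a := by
  obtain ⟨M, hM⟩ := a
  have hne (i j : Fin 3) (hij : i ≠ j) : M i i = 0 → M j j ≠ 0 := fun hi hj => hij (ha hi hj)
  have hMXM := upperTriangular_three_mul_pseudoInverse_mul (b := M 0 1) (c := M 0 2) (e := M 1 2)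
    (hne 0 1 (by decide)) (hne 0 2 (by decide)) (hne 1 2 (by decide))
  rw [← eq_of_mem_upperTriangularSubring_three hM] at hMXM
  exact ⟨⟨_, mem_upperTriangularSubring_three _ _ _ _ _ _⟩, Subtype.ext hMXM.symm⟩

end DivisionRing

/-- For a division ring `D`, the upper triangular matrix ring `T₃(D)` is VNL. -/
theorem upperTriangular_three_isVNL (D : Type*) [DivisionRing D] :
    IsVNLRing (upperTriangularSubring 3 D) := by
  intro a
  by_cases ha : {i | (a : Matrix (Fin 3) (Fin 3) D) i i = 0}.Subsingleton
  · exact .inl (isVNRegular_of_subsingleton_diag_eq_zero a ha)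
  refine .inr (isVNRegular_of_subsingleton_diag_eq_zero _ fun k hk l hl => ?_)
  obtain ⟨i, hi, j, hj, hij⟩ := Set.not_subsingleton_iff.mp ha
  have hdisj (m : Fin 3) (hm : (a : Matrix (Fin 3) (Fin 3) D) m m = 0) :
      ((1 - a : upperTriangularSubring 3 D) : Matrix (Fin 3) (Fin 3) D) m m ≠ 0 := by
    simp [hm]
  have hki : k ≠ i := by rintro rfl; exact hdisj k hi hk
  have hkj : k ≠ j := by rintro rfl; exact hdisj k hj hk
  have hli : l ≠ i := by rintro rfl; exact hdisj l hi hl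
  have hlj : l ≠ j := by rintro rfl; exact hdisj l hj hl
  omega
end

section
/- If the upper triangular matrix ring T_2(R) is VNL, then R is a division ring. -/
/-!
Write `⟨x, y; z⟩` for the triangular matrix with diagonal `x, z` and corner `y`. If
`⟨x, y; z⟩ = ⟨x, y; z⟩ X ⟨x, y; z⟩` then `x`, `z` are regular and `y ∈ xR + Rz`. Applying VNL to
`⟨a, 0; 1 - a⟩`, whose complement is `⟨1 - a, 0; a⟩`, shows every `a ∈ R` is regular. For an
idempotent `e` with `f = 1 - e`, applying it to `⟨f, 1; f⟩`, whose complement is `⟨e, -1; e⟩`,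
gives `1 ∈ fR + Rf` (so `e = e·1·e = 0`) or `1 ∈ eR + Re` (so `f = 0`). Finally if `a = axa` with
`a ≠ 0`, the idempotents `ax` and `xa` are nonzero, hence both equal `1`.
-/

namespace upperTriangularSubring

variable {R : Type*} [Ring R]

def mk₂ (x y z : R) : upperTriangularSubring 2 R :=
  ⟨!![x, y; 0, z], by intro i j hij; fin_cases i <;> fin_cases j <;> simp_all⟩

@[simp]
lemma mk₂_inj {x y z x' y' z' : R} : mk₂ x y z = mk₂ x' y' z' ↔ x = x' ∧ y = y' ∧ z = z' := by
  simp [mk₂, Subtype.ext_iff, and_assoc]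

@[simp]
lemma mk₂_mul_mk₂ (x y z x' y' z' : R) :
    mk₂ x y z * mk₂ x' y' z' = mk₂ (x * x') (x * y' + y * z') (z * z') := by
  ext : 1
  simp [mk₂]

lemma one_sub_mk₂ (x y z : R) : 1 - mk₂ x y z = mk₂ (1 - x) (-y) (1 - z) := by
  ext : 1
  simp [mk₂, Matrix.one_fin_two]

lemma eq_mk₂ (M : upperTriangularSubring 2 R) : M = mk₂ (M.1 0 0) (M.1 0 1) (M.1 1 1) := by
  ext : 1
  rw [Matrix.eta_fin_two M.1, M.2 1 0 (by decide)]
  simp [mk₂]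

lemma exists_of_isVNRegular_mk₂ {x y z : R} (h : IsVNRegular (mk₂ x y z)) :
    ∃ p q r : R, x = x * p * x ∧ y = x * p * y + x * q * z + y * r * z ∧ z = z * r * z := by
  obtain ⟨X, hX⟩ := h
  rw [eq_mk₂ X] at hX
  simp only [mk₂_mul_mk₂, mk₂_inj] at hX
  exact ⟨X.1 0 0, X.1 0 1, X.1 1 1, hX.1, hX.2.1.trans (by noncomm_ring), hX.2.2⟩

lemma isVNRegular_of_isVNRegular_mk₂_left {x y z : R} (h : IsVNRegular (mk₂ x y z)) :
    IsVNRegular x :=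
  let ⟨p, _, _, hx, _⟩ := exists_of_isVNRegular_mk₂ h
  ⟨p, hx⟩

lemma isVNRegular_of_isVNRegular_mk₂_right {x y z : R} (h : IsVNRegular (mk₂ x y z)) :
    IsVNRegular z :=
  let ⟨_, _, r, _, _, hz⟩ := exists_of_isVNRegular_mk₂ h
  ⟨r, hz⟩

lemma mul_mul_eq_zero_of_isVNRegular_mk₂ {x y z u v : R} (h : IsVNRegular (mk₂ x y z))
    (hu : u * x = 0) (hv : z * v = 0) : u * y * v = 0 := by
  obtain ⟨p, q, r, -, hy, -⟩ := exists_of_isVNRegular_mk₂ h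
  rw [hy]
  simp only [mul_add, ← mul_assoc, hu, zero_mul, zero_add]
  simp only [mul_assoc, hv, mul_zero]

end upperTriangularSubring

open upperTriangularSubring

namespace IsVNLRing

variable {R : Type*} [Ring R]

lemma isVNRegular_of_upperTriangular (h : IsVNLRing (upperTriangularSubring 2 R)) (a : R) :
    IsVNRegular a := by
  rcases h (mk₂ a 0 (1 - a)) with hr | hr
  · exact isVNRegular_of_isVNRegular_mk₂_left hr
  · rw [one_sub_mk₂, sub_sub_cancel] at hr
    exact isVNRegular_of_isVNRegular_mk₂_right hr

lemma eq_zero_or_eq_one_of_upperTriangular (h : IsVNLRing (upperTriangularSubring 2 R))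
    {e : R} (he : IsIdempotentElem e) : e = 0 ∨ e = 1 := by
  rcases h (mk₂ (1 - e) 1 (1 - e)) with hr | hr
  · have := mul_mul_eq_zero_of_isVNRegular_mk₂ hr he.mul_one_sub_self he.one_sub_mul_self
    rw [mul_one, he.eq] at this
    exact .inl this
  · rw [one_sub_mk₂, sub_sub_cancel] at hr
    have := mul_mul_eq_zero_of_isVNRegular_mk₂ hr he.one_sub_mul_self he.mul_one_sub_self
    rw [mul_neg_one, neg_mul, he.one_sub.eq, neg_eq_zero, sub_eq_zero] at this
    exact .inr this.symm

end IsVNLRing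

theorem IsVNRegular.isUnit {R : Type*} [Ring R] {a : R} (hreg : IsVNRegular a) (ha : a ≠ 0)
    (hidem : ∀ e : R, IsIdempotentElem e → e = 0 ∨ e = 1) : IsUnit a := by
  obtain ⟨x, hx⟩ := hreg
  have hax : a * x = 1 := by
    refine (hidem _ ?_).resolve_left fun h0 => ha ?_
    · rw [IsIdempotentElem, ← mul_assoc, ← hx]
    · rw [hx, h0, zero_mul]
  have hxa : x * a = 1 := by
    refine (hidem _ ?_).resolve_left fun h0 => ha ?_
    · rw [IsIdempotentElem, mul_assoc, ← mul_assoc a, ← hx]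
    · rw [hx, mul_assoc, h0, mul_zero]
  exact isUnit_iff_exists.mpr ⟨x, hax, hxa⟩

theorem divisionRing_of_upperTriangular_two_isVNL_general {R : Type*} [Ring R]
    (h : IsVNLRing (upperTriangularSubring 2 R)) :
    ∀ a : R, a ≠ 0 → IsUnit a := fun a ha =>
  (h.isVNRegular_of_upperTriangular a).isUnit ha fun _ he =>
    h.eq_zero_or_eq_one_of_upperTriangular he

/-- If `T₂(R)` is VNL (with `R` nonzero), then `R` is a division ring: every nonzero
element of `R` is a unit. -/
theorem divisionRing_of_upperTriangular_two_isVNL {R : Type*} [Ring R] [Nontrivial R]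
    (h : IsVNLRing (upperTriangularSubring 2 R)) :
    ∀ a : R, a ≠ 0 → IsUnit a :=
  divisionRing_of_upperTriangular_two_isVNL_general h
end

section
/- If R is a VNL ring and e is any idempotent of R, then the corner ring eRe is a VNL ring. -/
section Corner

variable {R : Type*} [Ring R] {e c d : R}

theorem IsVNRegular.exists_eq_mul_corner_mul (hc : IsVNRegular c) (hl : e * c = c)
    (hr : c * e = c) : ∃ x : R, c = c * (e * x * e) * c := by
  obtain ⟨x, hx⟩ := hc
  refine ⟨x, ?_⟩
  calc c = c * x * c := hx
    _ = (c * e) * x * (e * c) := by rw [hl, hr]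
    _ = c * (e * x * e) * c := by simp only [mul_assoc]

theorem IsVNRegular.of_mul_eq_of_mul_eq (hc : IsVNRegular c) (he : IsIdempotentElem e)
    (hl : e * c = d) (hr : c * e = d) : IsVNRegular d := by
  obtain ⟨x, hx⟩ := hc
  refine ⟨x, ?_⟩
  calc d = e * c * e := by rw [hl, ← hr, mul_assoc, he.eq]
    _ = e * (c * x * c) * e := by rw [← hx]
    _ = (e * c) * x * (c * e) := by simp only [mul_assoc]
    _ = d * x * d := by rw [hl, hr]

end Corner

/-- Corner rings of VNL rings are VNL: for an idempotent `e` of a VNL ring `R` and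
`a ∈ eRe`, either `a` or `e - a` is regular in the corner ring `eRe` (whose identity
is `e`). -/
theorem corner_isVNL_of_isVNL {R : Type*} [Ring R] (h : IsVNLRing R)
    {e : R} (he : IsIdempotentElem e) :
    ∀ a : R, a = e * a * e →
      (∃ x : R, a = a * (e * x * e) * a) ∨
      (∃ x : R, e - a = (e - a) * (e * x * e) * (e - a)) := by
  intro a ha
  obtain ⟨hea, hae⟩ := (Subsemigroup.mem_corner_iff he).mp ⟨a, ha.symm⟩
  rcases h a with ha_reg | hsub_reg
  · exact .inl (ha_reg.exists_eq_mul_corner_mul hea hae)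
  · have he_sub_reg : IsVNRegular (e - a) :=
      hsub_reg.of_mul_eq_of_mul_eq he (by rw [mul_sub, mul_one, hea])
        (by rw [sub_mul, one_mul, hae])
    exact .inr (he_sub_reg.exists_eq_mul_corner_mul (by rw [mul_sub, he.eq, hea])
      (by rw [sub_mul, he.eq, hae]))
end

section
/- An abelian ring R is VNL if and only if R is an exchange ring such that for every idempotent e of R, either eRe or (1-e)R(1-e) is a regular ring. -/
/-- A ring is an exchange ring if for every `a` there is an idempotent `e ∈ aR` with
`1 - e ∈ (1-a)R`. -/
def IsExchangeRing (R : Type*) [Ring R] : Prop :=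
  ∀ a : R, ∃ e r s : R, IsIdempotentElem e ∧ e = a * r ∧ 1 - e = (1 - a) * s

def IsAbelianRing (R : Type*) [Ring R] : Prop :=
  ∀ e : R, IsIdempotentElem e → ∀ r : R, e * r = r * e

section

variable {R : Type*} [Ring R]

def HasExchangeIdempotent (a : R) : Prop :=
  ∃ e r s : R, IsIdempotentElem e ∧ e = a * r ∧ 1 - e = (1 - a) * s

/-- Regularity of the corner ring `e R e`, whose elements are the `a` with `a = e * a * e`. -/
def IsRegularCorner (e : R) : Prop :=
  ∀ a : R, a = e * a * e → ∃ x : R, a = a * (e * x * e) * a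

lemma isIdempotentElem_mul_of_eq_mul_mul {a x : R} (hx : a = a * x * a) :
    IsIdempotentElem (a * x) := by
  rw [IsIdempotentElem, ← mul_assoc, ← hx]

lemma HasExchangeIdempotent.one_sub {a : R} (h : HasExchangeIdempotent a) :
    HasExchangeIdempotent (1 - a) := by
  obtain ⟨e, r, s, he, her, hes⟩ := h
  exact ⟨1 - e, s, r, he.one_sub, hes, by rwa [sub_sub_cancel, sub_sub_cancel]⟩

lemma IsVNRegular.hasExchangeIdempotent (hR : IsAbelianRing R) {a : R} (ha : IsVNRegular a) :
    HasExchangeIdempotent a := by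
  obtain ⟨x, hx⟩ := ha
  have hidem := isIdempotentElem_mul_of_eq_mul_mul hx
  have hcomm : a * (a * x) = a := by rw [← hR _ hidem a, ← hx]
  refine ⟨a * x, x, 1 - a * x, hidem, rfl, ?_⟩
  calc 1 - a * x = 1 - a * x - a + a * (a * x) := by rw [hcomm, sub_add_cancel]
    _ = (1 - a) * (1 - a * x) := by noncomm_ring

lemma IsVNLRing.isExchangeRing (hR : IsAbelianRing R) (h : IsVNLRing R) : IsExchangeRing R := by
  intro a
  rcases h a with ha | ha
  · exact ha.hasExchangeIdempotent hR
  · rw [← sub_sub_cancel 1 a]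
    exact (ha.hasExchangeIdempotent hR).one_sub

section Corner

variable {e : R}

lemma isVNRegular_mul_of_mul_eq (he : IsIdempotentElem e) {u v : R} (huv : u * v = e) :
    IsVNRegular (e * u) :=
  ⟨v, by rw [mul_assoc e u v, huv, he.eq, ← mul_assoc, he.eq]⟩

lemma isVNRegular_mul_of_isVNRegular (he : IsIdempotentElem e) {a : R} (hc : Commute e a)
    (ha : IsVNRegular a) : IsVNRegular (e * a) := by
  obtain ⟨x, hx⟩ := ha
  refine ⟨x, ?_⟩
  calc e * a = e * (a * x * a) * e := by rw [← hx, mul_assoc, ← hc.eq, ← mul_assoc, he.eq]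
    _ = e * a * x * (a * e) := by simp only [mul_assoc]
    _ = e * a * x * (e * a) := by rw [hc.eq]

lemma IsVNRegular.exists_eq_mul_corner_mul_s13 (he : IsIdempotentElem e) {a : R}
    (hae : a = e * a * e) (ha : IsVNRegular a) : ∃ x, a = a * (e * x * e) * a := by
  obtain ⟨x, hx⟩ := ha
  have hea : e * a = a := by rw [hae, ← mul_assoc, ← mul_assoc, he.eq]
  have hae' : a * e = a := by rw [hae, mul_assoc, he.eq]
  refine ⟨x, ?_⟩
  calc a = a * x * a := hx
    _ = a * e * x * (e * a) := by rw [hae', hea]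
    _ = a * (e * x * e) * a := by noncomm_ring

lemma isRegularCorner_iff_forall_isVNRegular_mul (he : IsIdempotentElem e)
    (hc : ∀ r, Commute e r) : IsRegularCorner e ↔ ∀ a, IsVNRegular (e * a) := by
  constructor
  · intro h a
    have hea : e * a = e * (e * a) * e := by
      rw [mul_assoc, ← (hc (e * a)).eq, ← mul_assoc, ← mul_assoc, he.eq, he.eq]
    obtain ⟨x, hx⟩ := h (e * a) hea
    exact ⟨e * x * e, hx⟩
  · intro h a hae
    have hea : e * a = a := by rw [hae, ← mul_assoc, ← mul_assoc, he.eq]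
    exact IsVNRegular.exists_eq_mul_corner_mul_s13 he hae (hea ▸ h a)

lemma isVNRegular_of_mul_of_one_sub_mul {a : R} (hc : Commute e a)
    (h₁ : IsVNRegular (e * a)) (h₂ : IsVNRegular ((1 - e) * a)) : IsVNRegular a := by
  obtain ⟨x, hx⟩ := h₁
  obtain ⟨y, hy⟩ := h₂
  have hc' : Commute (1 - e) a := (Commute.one_left a).sub_left hc
  refine ⟨e * x * e + (1 - e) * y * (1 - e), ?_⟩
  calc a = e * a + (1 - e) * a := by noncomm_ring
    _ = e * a * x * (e * a) + (1 - e) * a * y * ((1 - e) * a) := by rw [← hx, ← hy]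
    _ = a * e * x * (e * a) + a * (1 - e) * y * ((1 - e) * a) := by rw [hc.eq, hc'.eq]
    _ = a * (e * x * e + (1 - e) * y * (1 - e)) * a := by noncomm_ring

lemma IsVNLRing.isRegularCorner_or_isRegularCorner_one_sub (h : IsVNLRing R)
    (he : IsIdempotentElem e) (hc : ∀ r, Commute e r) :
    IsRegularCorner e ∨ IsRegularCorner (1 - e) := by
  have hc' : ∀ r, Commute (1 - e) r := fun r => (Commute.one_left r).sub_left (hc r)
  rw [isRegularCorner_iff_forall_isVNRegular_mul he hc,
    isRegularCorner_iff_forall_isVNRegular_mul he.one_sub hc']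
  by_contra! hcon
  obtain ⟨⟨a, ha⟩, b, hb⟩ := hcon
  set c := e * a + (1 - e) * (1 - b)
  have hec : e * c = e * a := by
    rw [mul_add, ← mul_assoc, he.eq, ← mul_assoc, he.mul_one_sub_self, zero_mul, add_zero]
  have hfc : (1 - e) * (1 - c) = (1 - e) * b := by
    have hc_sub : 1 - c = e * (1 - a) + (1 - e) * b := by simp only [c]; noncomm_ring
    rw [hc_sub, mul_add, ← mul_assoc, he.one_sub_mul_self, zero_mul, zero_add, ← mul_assoc,
      he.one_sub.eq]
  rcases h c with hreg | hreg
  · exact ha (hec ▸ isVNRegular_mul_of_isVNRegular he (hc c) hreg)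
  · exact hb (hfc ▸ isVNRegular_mul_of_isVNRegular he.one_sub (hc' _) hreg)

end Corner

lemma IsExchangeRing.isVNLRing (hR : IsAbelianRing R) (hex : IsExchangeRing R)
    (hcorner : ∀ e : R, IsIdempotentElem e → IsRegularCorner e ∨ IsRegularCorner (1 - e)) :
    IsVNLRing R := by
  intro a
  obtain ⟨e, r, s, he, her, hes⟩ := hex a
  have hc : ∀ r, Commute e r := hR e he
  have hc' : ∀ r, Commute (1 - e) r := hR (1 - e) he.one_sub
  rcases hcorner e he with h | h
  · exact Or.inr <| isVNRegular_of_mul_of_one_sub_mul (hc (1 - a))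
      ((isRegularCorner_iff_forall_isVNRegular_mul he hc).1 h (1 - a))
      (isVNRegular_mul_of_mul_eq he.one_sub hes.symm)
  · exact Or.inl <| isVNRegular_of_mul_of_one_sub_mul (hc a)
      (isVNRegular_mul_of_mul_eq he her.symm)
      ((isRegularCorner_iff_forall_isVNRegular_mul he.one_sub hc').1 h a)
end

/-- An abelian ring is VNL iff it is an exchange ring such that for every idempotent `e`,
one of the corner rings `eRe`, `(1-e)R(1-e)` is regular. -/
theorem abelian_isVNL_iff {R : Type*} [Ring R]
    (habelian : ∀ e : R, IsIdempotentElem e → ∀ r : R, e * r = r * e) :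
    IsVNLRing R ↔
      (IsExchangeRing R ∧
        ∀ e : R, IsIdempotentElem e →
          (∀ a : R, a = e * a * e → ∃ x : R, a = a * (e * x * e) * a) ∨
          (∀ a : R, a = (1 - e) * a * (1 - e) →
            ∃ x : R, a = a * ((1 - e) * x * (1 - e)) * a)) := by
  constructor
  · intro h
    exact ⟨h.isExchangeRing habelian,
      fun e he => h.isRegularCorner_or_isRegularCorner_one_sub he (habelian e he)⟩
  · rintro ⟨hex, hcorner⟩
    exact hex.isVNLRing habelian hcorner
end

section
/- Let I be a regular (two-sided) ideal of a ring R, meaning every element a of I is regular in R. Then R is a VNL ring if and only if the quotient ring R/I is a VNL ring. -/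
/-! A surjective ring map `f : R → S` transports the VNL property, since `f (1 - a) = 1 - f a`.
Conversely, if `f a = f a * f x * f a`, then `a - a * x * a` lies in the kernel; when the kernel
is regular, McCoy's lemma lifts regularity of `a - a * x * a` to `a`. -/

namespace IsVNRegular

variable {R S : Type*} [Ring R] [Ring S]

/-- McCoy's lemma. -/
theorem of_sub_mul_mul_self {a : R} (x : R) (h : IsVNRegular (a - a * x * a)) :
    IsVNRegular a := by
  obtain ⟨y, hy⟩ := h
  refine ⟨x + (1 - x * a) * y * (1 - a * x), ?_⟩
  calc a = a * x * a + (a - a * x * a) := by noncomm_ring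
    _ = a * x * a + (a - a * x * a) * y * (a - a * x * a) := by rw [← hy]
    _ = a * (x + (1 - x * a) * y * (1 - a * x)) * a := by noncomm_ring

theorem map {F : Type*} [FunLike F R S] [MulHomClass F R S] (f : F) {a : R}
    (h : IsVNRegular a) : IsVNRegular (f a) := by
  obtain ⟨x, hx⟩ := h
  exact ⟨f x, by rw [← map_mul, ← map_mul, ← hx]⟩

theorem of_map {f : R →+* S} (hf : Function.Surjective f)
    (hker : ∀ b, f b = 0 → IsVNRegular b) {a : R} (h : IsVNRegular (f a)) :
    IsVNRegular a := by
  obtain ⟨x', hx'⟩ := h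
  obtain ⟨x, rfl⟩ := hf x'
  refine of_sub_mul_mul_self x (hker _ ?_)
  rw [map_sub, map_mul, map_mul, ← hx', sub_self]

end IsVNRegular

theorem isVNLRing_iff_of_surjective {R S : Type*} [Ring R] [Ring S] {f : R →+* S}
    (hf : Function.Surjective f) (hker : ∀ b, f b = 0 → IsVNRegular b) :
    IsVNLRing R ↔ IsVNLRing S := by
  constructor
  · intro hR b
    obtain ⟨a, rfl⟩ := hf b
    have h := (hR a).imp (IsVNRegular.map f) (IsVNRegular.map f)
    rwa [map_sub, map_one] at h
  · intro hS a
    have h := hS (f a)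
    rw [← map_one f, ← map_sub] at h
    exact h.imp (IsVNRegular.of_map hf hker) (IsVNRegular.of_map hf hker)

/-- If `I` is a regular two-sided ideal of `R` (every element of `I` is regular in `R`),
then `R` is VNL iff `R/I` is VNL. -/
theorem isVNL_iff_quotient_isVNL {R : Type*} [Ring R] (I : TwoSidedIdeal R)
    (hI : ∀ a ∈ I, IsVNRegular a) :
    IsVNLRing R ↔ IsVNLRing I.ringCon.Quotient :=
  isVNLRing_iff_of_surjective I.ringCon.mk'_surjective fun b hb =>
    hI b ((I.mem_iff b).mpr (I.ringCon.eq.mp hb))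
end

section
/- Let R be a ring decomposed by an idempotent e as a generalized matrix ring with S = eRe, T = (1-e)R(1-e), X = eR(1-e), Y = (1-e)Re. If XY = 0, then X and Y are contained in the Jacobson radical J(R). -/
theorem Ideal.mem_jacobson_bot_of_forall_mul_mul_eq_zero {R : Type*} [Ring R] {a : R}
    (h : ∀ y : R, a * y * a = 0) : a ∈ Ideal.jacobson (⊥ : Ideal R) := by
  refine Ideal.mem_jacobson_iff.mpr fun y => ⟨1 - y * a, Ideal.mem_bot.mpr ?_⟩
  calc (1 - y * a) * y * a + (1 - y * a) - 1 = -(y * (a * y * a)) := by noncomm_ring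
    _ = 0 := by rw [h y, mul_zero, neg_zero]

theorem IsIdempotentElem.mul_mul_one_sub_mul_mul_eq_zero {R : Type*} [Ring R] {e : R}
    (he : IsIdempotentElem e)
    (hXY : ∀ x y : R, (e * x * (1 - e)) * ((1 - e) * y * e) = 0) (x y : R) :
    e * x * (1 - e) * y * e = 0 := by
  have h := hXY x y
  rwa [← mul_assoc, ← mul_assoc, mul_assoc (e * x), he.one_sub] at h

/-- Peirce decomposition w.r.t. an idempotent `e`: if `X·Y = 0` where `X = eR(1-e)` and
`Y = (1-e)Re`, then `X` and `Y` are contained in the Jacobson radical. -/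
theorem peirce_subset_jacobson {R : Type*} [Ring R] {e : R} (he : IsIdempotentElem e)
    (hXY : ∀ x y : R, (e * x * (1 - e)) * ((1 - e) * y * e) = 0) :
    (∀ r : R, e * r * (1 - e) ∈ Ideal.jacobson (⊥ : Ideal R)) ∧
    (∀ r : R, (1 - e) * r * e ∈ Ideal.jacobson (⊥ : Ideal R)) := by
  have hXRY := he.mul_mul_one_sub_mul_mul_eq_zero hXY
  constructor
  · refine fun r => Ideal.mem_jacobson_bot_of_forall_mul_mul_eq_zero fun y => ?_
    calc e * r * (1 - e) * y * (e * r * (1 - e))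
        = e * r * (1 - e) * y * e * (r * (1 - e)) := by simp only [mul_assoc]
      _ = 0 := by rw [hXRY, zero_mul]
  · refine fun r => Ideal.mem_jacobson_bot_of_forall_mul_mul_eq_zero fun y => ?_
    calc (1 - e) * r * e * y * ((1 - e) * r * e)
        = (1 - e) * r * (e * y * (1 - e) * r * e) := by simp only [mul_assoc]
      _ = 0 := by rw [hXRY, mul_zero]
end

section
/- Let e1 and e2 be local idempotents of a ring R. Then either e1R ≅ e2R as right R-modules, or both e1Re2 ⊆ J(R) and e2Re1 ⊆ J(R). -/
/-- An idempotent `e` is local if the corner ring `eRe` (with identity `e`) is a local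
ring: `e ≠ 0` and for every `a ∈ eRe`, `a` or `e - a` is invertible in `eRe`. -/
def IsLocalIdempotent {R : Type*} [Ring R] (e : R) : Prop :=
  IsIdempotentElem e ∧ e ≠ 0 ∧
    ∀ a : R, a = e * a * e →
      (∃ b : R, b = e * b * e ∧ a * b = e ∧ b * a = e) ∨
      (∃ b : R, b = e * b * e ∧ (e - a) * b = e ∧ b * (e - a) = e)

open MulOpposite Submodule

section Corner

variable {R : Type*} [Ring R]

def IsCornerUnit (e a : R) : Prop :=
  ∃ b : R, b = e * b * e ∧ a * b = e ∧ b * a = e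

theorem IsLocalIdempotent.isCornerUnit_or {e a : R} (he : IsLocalIdempotent e)
    (ha : a = e * a * e) : IsCornerUnit e a ∨ IsCornerUnit e (e - a) :=
  he.2.2 a ha

theorem IsIdempotentElem.mul_eq_of_eq_mul_mul_left {e f z : R} (he : IsIdempotentElem e)
    (hz : z = e * z * f) : e * z = z := by
  rw [hz, ← mul_assoc, ← mul_assoc, he.eq]

theorem IsIdempotentElem.mul_eq_of_eq_mul_mul_right {e f z : R} (hf : IsIdempotentElem f)
    (hz : z = e * z * f) : z * f = z := by
  rw [hz, mul_assoc, hf.eq]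

theorem IsCornerUnit.isUnit_one_sub {e z : R} (he : IsIdempotentElem e) (hz : z = e * z * e)
    (h : IsCornerUnit e (e - z)) : IsUnit (1 - z) := by
  obtain ⟨w, hw, hzw, hwz⟩ := h
  have hzw' : w - z * w = e := by rwa [sub_mul, he.mul_eq_of_eq_mul_mul_left hw] at hzw
  have hwz' : w - w * z = e := by rwa [mul_sub, he.mul_eq_of_eq_mul_mul_right hw] at hwz
  refine ⟨⟨1 - z, 1 - e + w, ?_, ?_⟩, rfl⟩
  · calc (1 - z) * (1 - e + w) = 1 - e + (w - z * w) - (z - z * e) := by noncomm_ring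
      _ = 1 := by rw [hzw', he.mul_eq_of_eq_mul_mul_right hz]; abel
  · calc (1 - e + w) * (1 - z) = 1 - e + (w - w * z) - (z - e * z) := by noncomm_ring
      _ = 1 := by rw [hwz', he.mul_eq_of_eq_mul_mul_left hz]; abel

-- Jacobson's lemma, with its explicit left inverse.
theorem one_sub_mul_mul_mul_one_add_mul_eq_one {a b w : R} (h : w * (1 + b * a) = 1) :
    (1 - a * w * b) * (1 + a * b) = 1 := by
  calc (1 - a * w * b) * (1 + a * b) = 1 + a * b - a * (w * (1 + b * a)) * b := by
        noncomm_ring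
    _ = 1 := by rw [h]; noncomm_ring

theorem IsLocalIdempotent.exists_mul_eq_of_notMem_jacobson {e x : R} (he : IsLocalIdempotent e)
    (hx : x * e = x) (hxJ : x ∉ Ideal.jacobson (⊥ : Ideal R)) : ∃ v, e * v = v ∧ v * x = e := by
  obtain ⟨y, hy⟩ : ∃ y, ∀ w, w * (1 + y * x) ≠ 1 := by
    simpa [Ideal.mem_jacobson_iff, sub_eq_zero, mul_add, mul_assoc, add_comm] using hxJ
  have hz : -(e * y * x) = e * -(e * y * x) * e := by
    have hez : e * (e * y * x) = e * y * x := by simp only [← mul_assoc, he.1.eq]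
    rw [mul_neg, neg_mul, hez, mul_assoc _ x e, hx]
  rcases he.isCornerUnit_or hz with ⟨b, hb, -, hbz⟩ | hunit
  · refine ⟨-(b * y), ?_, ?_⟩
    · rw [mul_neg, ← mul_assoc, he.1.mul_eq_of_eq_mul_mul_left hb]
    · rw [← hbz, mul_neg, neg_mul, ← mul_assoc, ← mul_assoc,
        he.1.mul_eq_of_eq_mul_mul_right hb]
  · obtain ⟨w, hw⟩ := (hunit.isUnit_one_sub he.1 hz).exists_left_inv
    have hw' : w * (1 + e * (y * x)) = 1 := by rwa [sub_neg_eq_add, mul_assoc] at hw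
    have := one_sub_mul_mul_mul_one_add_mul_eq_one hw'
    rw [mul_assoc y x e, hx] at this
    exact (hy _ this).elim

theorem IsLocalIdempotent.eq_of_isIdempotentElem {e f : R} (he : IsLocalIdempotent e)
    (hf : f = e * f * e) (hff : IsIdempotentElem f) (hf0 : f ≠ 0) : f = e := by
  have hfe : f * e = f := he.1.mul_eq_of_eq_mul_mul_right hf
  rcases he.isCornerUnit_or hf with ⟨b, -, hfb, -⟩ | ⟨b, -, hfb, -⟩
  · calc f = f * (f * b) := by rw [hfb, hfe]
      _ = e := by rw [← mul_assoc, hff.eq, hfb]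
  · refine absurd ?_ hf0
    calc f = f * ((e - f) * b) := by rw [hfb, hfe]
      _ = 0 := by rw [← mul_assoc, mul_sub, hfe, hff.eq, sub_self, zero_mul]

theorem IsIdempotentElem.mul_eq_of_mem_span_singleton {e m : R} (he : IsIdempotentElem e)
    (hm : m ∈ span Rᵐᵒᵖ {e}) : e * m = m := by
  obtain ⟨a, rfl⟩ := mem_span_singleton.1 hm
  rw [smul_eq_mul_unop, ← mul_assoc, he.eq]

theorem mul_mem_span_singleton_of_mul_eq {e a : R} (b : R) (ha : e * a = a) :
    a * b ∈ span Rᵐᵒᵖ {e} :=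
  mem_span_singleton.2 ⟨op (a * b), by rw [op_smul_eq_mul, ← mul_assoc, ha]⟩

theorem nonempty_linearEquiv_span_singleton {e₁ e₂ p q : R} (hp : e₂ * p = p)
    (hq : e₁ * q = q) (hqp : q * p = e₁) (hpq : p * q = e₂) :
    Nonempty (span Rᵐᵒᵖ {e₁} ≃ₗ[Rᵐᵒᵖ] span Rᵐᵒᵖ {e₂}) := by
  have he₁ : IsIdempotentElem e₁ := by
    calc e₁ * e₁ = e₁ * q * p := by rw [mul_assoc, hqp]
      _ = e₁ := by rw [hq, hqp]
  have he₂ : IsIdempotentElem e₂ := by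
    calc e₂ * e₂ = e₂ * p * q := by rw [mul_assoc, hpq]
      _ = e₂ := by rw [hp, hpq]
  let F := (DistribSMul.toLinearMap Rᵐᵒᵖ R p).restrict (p := span Rᵐᵒᵖ {e₁})
    (q := span Rᵐᵒᵖ {e₂}) fun m _ => mul_mem_span_singleton_of_mul_eq m hp
  let G := (DistribSMul.toLinearMap Rᵐᵒᵖ R q).restrict (p := span Rᵐᵒᵖ {e₂})
    (q := span Rᵐᵒᵖ {e₁}) fun m _ => mul_mem_span_singleton_of_mul_eq m hq
  refine ⟨.ofLinearMap F G (LinearMap.ext fun m => Subtype.ext ?_)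
    (LinearMap.ext fun m => Subtype.ext ?_)⟩
  · change p * (q * m) = m
    rw [← mul_assoc, hpq, he₂.mul_eq_of_mem_span_singleton m.2]
  · change q * (p * m) = m
    rw [← mul_assoc, hqp, he₁.mul_eq_of_mem_span_singleton m.2]

theorem nonempty_linearEquiv_of_notMem_jacobson {e₁ e₂ r : R} (h₁ : IsLocalIdempotent e₁)
    (h₂ : IsLocalIdempotent e₂) (hr : e₁ * r * e₂ ∉ Ideal.jacobson (⊥ : Ideal R)) :
    Nonempty (span Rᵐᵒᵖ {e₁} ≃ₗ[Rᵐᵒᵖ] span Rᵐᵒᵖ {e₂}) := by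
  set x := e₁ * r * e₂ with hx
  have hx₁ : e₁ * x = x := by rw [hx, ← mul_assoc, ← mul_assoc, h₁.1.eq]
  have hx₂ : x * e₂ = x := by rw [hx, mul_assoc, h₂.1.eq]
  obtain ⟨v, hv, hvx⟩ := h₂.exists_mul_eq_of_notMem_jacobson hx₂ hr
  have hvx' : v * e₁ * x = e₂ := by rw [mul_assoc, hx₁, hvx]
  have hxv : x * (v * e₁) = e₁ := by
    refine h₁.eq_of_isIdempotentElem ?_ ?_ fun h0 => hr ?_
    · rw [← mul_assoc e₁ x, hx₁, mul_assoc x (v * e₁) e₁, mul_assoc v e₁ e₁, h₁.1.eq]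
    · calc x * (v * e₁) * (x * (v * e₁)) = x * (v * e₁ * x) * (v * e₁) := by
            simp only [mul_assoc]
        _ = x * (v * e₁) := by rw [hvx', hx₂]
    · have hx0 : x = 0 := calc
        x = x * (v * e₁) * x := by rw [mul_assoc, hvx', hx₂]
        _ = 0 := by rw [h0, zero_mul]
      rw [hx0]
      exact zero_mem _
  exact nonempty_linearEquiv_span_singleton (by rw [← mul_assoc, hv]) hx₁ hxv hvx'

end Corner

/-- For local idempotents `e₁, e₂`, either `e₁R ≅ e₂R` as right `R`-modules, or both
`e₁Re₂ ⊆ J(R)` and `e₂Re₁ ⊆ J(R)`. -/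
theorem local_idempotents_iso_or_jacobson {R : Type*} [Ring R] {e₁ e₂ : R}
    (h₁ : IsLocalIdempotent e₁) (h₂ : IsLocalIdempotent e₂) :
    Nonempty ((Submodule.span Rᵐᵒᵖ {e₁} : Submodule Rᵐᵒᵖ R) ≃ₗ[Rᵐᵒᵖ]
        (Submodule.span Rᵐᵒᵖ {e₂} : Submodule Rᵐᵒᵖ R)) ∨
      ((∀ r : R, e₁ * r * e₂ ∈ Ideal.jacobson (⊥ : Ideal R)) ∧
       (∀ r : R, e₂ * r * e₁ ∈ Ideal.jacobson (⊥ : Ideal R))) := by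
  rw [or_iff_not_imp_right, not_and_or]
  rintro (h | h) <;> obtain ⟨r, hr⟩ := not_forall.1 h
  · exact nonempty_linearEquiv_of_notMem_jacobson h₁ h₂ hr
  · exact (nonempty_linearEquiv_of_notMem_jacobson h₂ h₁ hr).map LinearEquiv.symm
end

section
/- Let R be a ring with a primitive idempotent e such that eRe is not a division ring. If R is VNL, then (1-e)R(1-e) is a regular ring, eR(1-e) ⊆ J(R), and (1-e)ReR(1-e) = 0. -/
section

variable {R : Type*} [Ring R]

theorem IsVNRegular.exists_of_intertwine {z a u v : R} (hz : IsVNRegular z)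
    (hu : u * z = a * u) (hv : z * v = v * a) (ha : a * (u * v) = a) :
    ∃ y, a = a * (u * y * v) * a := by
  obtain ⟨y, hy⟩ := hz
  refine ⟨y, ?_⟩
  calc a = u * z * v := by rw [hu, mul_assoc, ha]
    _ = u * (z * y * z) * v := by rw [← hy]
    _ = u * z * y * (z * v) := by simp only [mul_assoc]
    _ = a * (u * y * v) * a := by rw [hu, hv]; simp only [mul_assoc]

theorem eq_zero_or_exists_corner_inverse_of_isVNRegular {e a : R} (he : IsIdempotentElem e)
    (hprim : ∀ f : R, IsIdempotentElem f → f = e * f * e → f = 0 ∨ f = e)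
    (hea : e * a = a) (hae : a * e = a) (hreg : IsVNRegular a) :
    a = 0 ∨ ∃ b : R, b = e * b * e ∧ a * b = e ∧ b * a = e := by
  obtain ⟨x, hx⟩ := hreg
  have hbab : a * (e * x * e) * a = a := by
    rw [show a * (e * x * e) * a = a * e * x * (e * a) by simp only [mul_assoc], hae, hea, ← hx]
  have heb : e * (e * x * e) = e * x * e := by rw [← mul_assoc, ← mul_assoc, he.eq]
  have hbe : e * x * e * e = e * x * e := he.mul_mul_self _
  generalize e * x * e = b at hbab heb hbe
  have hab : IsIdempotentElem (a * b) := by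
    rw [IsIdempotentElem, ← mul_assoc, hbab]
  have hba : IsIdempotentElem (b * a) := by
    rw [IsIdempotentElem, mul_assoc, ← mul_assoc a, hbab]
  rcases hprim _ hab (by rw [← mul_assoc, hea, mul_assoc, hbe]) with hab0 | habe
  · exact Or.inl (by rw [← hbab, hab0, zero_mul])
  rcases hprim _ hba (by rw [← mul_assoc, heb, mul_assoc, hae]) with hba0 | hbae
  · exact Or.inl (by rw [← hbab, mul_assoc, hba0, mul_zero])
  · exact Or.inr ⟨b, (by rw [heb, hbe]), habe, hbae⟩

theorem IsVNLRing.mul_ne_of_not_isVNRegular (hVNL : IsVNLRing R) {e a q p : R}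
    (he : IsIdempotentElem e) (hea : e * a = a) (hae : a * e = a) (ha : ¬ IsVNRegular a)
    (hqe : q * e = 0) (hep : e * p = 0) : q * p ≠ e := by
  intro hqp
  have hqa : q * a = 0 := by rw [← hea, ← mul_assoc, hqe, zero_mul]
  have hap : a * p = 0 := by rw [← hae, mul_assoc, hep, mul_zero]
  refine ha ?_
  -- `z = e - a + paq` satisfies `qz = aq`, `zp = pa` and `e(1 - z) = a = (1 - z)e`.
  rcases hVNL (e - a + p * a * q) with hz | hz
  · obtain ⟨y, hy⟩ := hz.exists_of_intertwine (u := q) (v := p)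
      (by simp only [mul_add, mul_sub, ← mul_assoc, hqe, hqa, hqp, hea]; abel)
      (by simp only [add_mul, sub_mul, mul_assoc, hep, hap, hqp, hae]; abel)
      (by rw [hqp, hae])
    exact ⟨_, hy⟩
  · obtain ⟨y, hy⟩ := hz.exists_of_intertwine (a := a) (u := e) (v := e)
      (by simp only [mul_sub, mul_add, mul_one, ← mul_assoc, he.eq, hea, hep, hae, zero_mul]
          abel)
      (by simp only [sub_mul, add_mul, one_mul, mul_assoc, he.eq, hae, hqe, hea, mul_zero]; abel)
      (by rw [he.eq, hae])
    exact ⟨_, hy⟩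

theorem IsVNLRing.exists_eq_mul_corner_mul_of_not_isVNRegular (hVNL : IsVNLRing R) {e a b : R}
    (he : IsIdempotentElem e) (hea : e * a = a) (hae : a * e = a) (ha : ¬ IsVNRegular a)
    (hb : b = (1 - e) * b * (1 - e)) : ∃ x, b = b * ((1 - e) * x * (1 - e)) * b := by
  have heb : e * b = 0 := by
    rw [hb, ← mul_assoc, ← mul_assoc, he.mul_one_sub_self, zero_mul, zero_mul]
  have hbe : b * e = 0 := by rw [hb, mul_assoc, he.one_sub_mul_self, mul_zero]
  -- `z = a + (1 - e) - b` satisfies `ez = a = ze` and `(1 - e)(1 - z) = b = (1 - z)(1 - e)`.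
  rcases hVNL (a + (1 - e) - b) with hz | hz
  · obtain ⟨y, hy⟩ := hz.exists_of_intertwine (a := a) (u := e) (v := e)
      (by simp only [mul_add, mul_sub, mul_one, he.eq, hea, heb, hae]; abel)
      (by simp only [add_mul, sub_mul, one_mul, he.eq, hae, hbe, hea]; abel)
      (by rw [he.eq, hae])
    exact absurd ⟨_, hy⟩ ha
  · have hfb : (1 - e) * b = b := by rw [sub_mul, one_mul, heb, sub_zero]
    have hbf : b * (1 - e) = b := by rw [mul_sub, mul_one, hbe, sub_zero]
    have hfa : (1 - e) * a = 0 := by rw [sub_mul, one_mul, hea, sub_self]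
    have haf : a * (1 - e) = 0 := by rw [mul_sub, mul_one, hae, sub_self]
    exact hz.exists_of_intertwine
      (by simp only [mul_sub, mul_add, mul_one, hfa, hfb, he.one_sub.eq, hbf]; abel)
      (by simp only [sub_mul, add_mul, one_mul, haf, hbf, he.one_sub.eq, hfb]; abel)
      (by rw [he.one_sub.eq, hbf])

theorem IsVNLRing.corner_mul_corner_eq_zero (hVNL : IsVNLRing R) {e a : R} (he : IsIdempotentElem e)
    (hprim : ∀ f : R, IsIdempotentElem f → f = e * f * e → f = 0 ∨ f = e)
    (hea : e * a = a) (hae : a * e = a) (ha : ¬ IsVNRegular a) (r s : R) :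
    ((1 - e) * r * e) * (e * s * (1 - e)) = 0 := by
  have hfe : (1 - e) * e = 0 := he.one_sub_mul_self
  have hef : e * (1 - e) = 0 := he.mul_one_sub_self
  generalize hp : (1 - e) * r * e = p
  generalize hq : e * s * (1 - e) = q
  have hpe : p * e = p := by rw [← hp, he.mul_mul_self]
  have hep : e * p = 0 := by rw [← hp, ← mul_assoc, ← mul_assoc, hef, zero_mul, zero_mul]
  have heq : e * q = q := by rw [← hq, ← mul_assoc, ← mul_assoc, he.eq]
  have hqe : q * e = 0 := by rw [← hq, mul_assoc, hfe, mul_zero]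
  obtain ⟨x, hx⟩ := hVNL.exists_eq_mul_corner_mul_of_not_isVNRegular he hea hae ha
    (b := p * q) (by
      rw [← hp, ← hq]
      simp only [mul_assoc, he.one_sub.mul_self_mul, he.one_sub.eq])
  generalize hc : (1 - e) * x * (1 - e) = c at hx
  have hec : e * c = 0 := by rw [← hc, ← mul_assoc, ← mul_assoc, hef, zero_mul, zero_mul]
  have hpq : ∀ z, p * (q * (c * (p * (q * z)))) = p * (q * z) := fun z ↦ by
    simpa only [mul_assoc] using congrArg (· * z) hx.symm
  have hpq' : p * (q * (c * (p * q))) = p * q := by simpa only [mul_assoc] using hx.symm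
  have hidem : IsIdempotentElem (q * (c * (p * q) * c) * p) := by
    rw [IsIdempotentElem]; simp only [mul_assoc, hpq]
  rcases hprim _ hidem (by simp only [mul_assoc, ← mul_assoc e q, heq, hpe]) with h0 | h1
  · calc p * q = p * (q * (c * (p * q) * c) * p) * q := by simp only [mul_assoc, hpq, hpq']
      _ = 0 := by rw [h0, mul_zero, zero_mul]
  · exact absurd (by simpa only [mul_assoc] using h1)
      (hVNL.mul_ne_of_not_isVNRegular he hea hae ha hqe
        (p := c * (p * q) * c * p) (by simp only [← mul_assoc, hec, zero_mul]))

theorem mem_jacobson_bot_of_forall_mul_mul_eq_zero {u : R} (hu : ∀ t, u * t * u = 0) :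
    u ∈ Ideal.jacobson (⊥ : Ideal R) := by
  refine Ideal.mem_jacobson_iff.mpr fun y ↦ ⟨1 - y * u, ?_⟩
  have hsq : y * u * (y * u) = 0 := by rw [mul_assoc, ← mul_assoc u, hu, mul_zero]
  rw [Ideal.mem_bot]
  calc (1 - y * u) * y * u + (1 - y * u) - 1 = -(y * u * (y * u)) := by noncomm_ring
    _ = 0 := by rw [hsq, neg_zero]

end

theorem primitive_nondivision_corner_general {R : Type*} [Ring R] {e : R}
    (he : IsIdempotentElem e)
    (hprim : ∀ f : R, IsIdempotentElem f → f = e * f * e → f = 0 ∨ f = e)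
    (hnotdiv : ¬ ∀ a : R, a = e * a * e → a ≠ 0 →
        ∃ b : R, b = e * b * e ∧ a * b = e ∧ b * a = e)
    (hVNL : IsVNLRing R) :
    (∀ a : R, a = (1 - e) * a * (1 - e) →
        ∃ x : R, a = a * ((1 - e) * x * (1 - e)) * a) ∧
    (∀ r : R, e * r * (1 - e) ∈ Ideal.jacobson (⊥ : Ideal R)) ∧
    (∀ r s : R, ((1 - e) * r * e) * (e * s * (1 - e)) = 0) := by
  push Not at hnotdiv
  obtain ⟨a, ha, ha0, hainv⟩ := hnotdiv
  have hea : e * a = a := by rw [ha, ← mul_assoc, ← mul_assoc, he.eq]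
  have hae : a * e = a := by rw [ha, mul_assoc, he.eq]
  have hreg : ¬ IsVNRegular a := fun hreg ↦
    (eq_zero_or_exists_corner_inverse_of_isVNRegular he hprim hea hae hreg).elim ha0
      fun ⟨b, hb, hab, hba⟩ ↦ hainv b hb hab hba
  have hzero := hVNL.corner_mul_corner_eq_zero he hprim hea hae hreg
  refine ⟨fun b hb ↦ hVNL.exists_eq_mul_corner_mul_of_not_isVNRegular he hea hae hreg hb,
    fun r ↦ mem_jacobson_bot_of_forall_mul_mul_eq_zero fun t ↦ ?_, hzero⟩
  calc e * r * (1 - e) * t * (e * r * (1 - e))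
      = e * r * ((1 - e) * t * e * (e * r * (1 - e))) := by simp only [mul_assoc, he.mul_self_mul]
    _ = 0 := by rw [hzero, mul_zero]

/-- Let `e` be a primitive idempotent of a VNL ring `R` such that the corner ring `eRe`
is not a division ring. Then `(1-e)R(1-e)` is regular, `eR(1-e) ⊆ J(R)`, and
`(1-e)ReR(1-e) = 0`. -/
theorem primitive_nondivision_corner {R : Type*} [Ring R] {e : R}
    (he : IsIdempotentElem e) (hne : e ≠ 0)
    (hprim : ∀ f : R, IsIdempotentElem f → f = e * f * e → f = 0 ∨ f = e)
    (hnotdiv : ¬ ∀ a : R, a = e * a * e → a ≠ 0 →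
        ∃ b : R, b = e * b * e ∧ a * b = e ∧ b * a = e)
    (hVNL : IsVNLRing R) :
    (∀ a : R, a = (1 - e) * a * (1 - e) →
        ∃ x : R, a = a * ((1 - e) * x * (1 - e)) * a) ∧
    (∀ r : R, e * r * (1 - e) ∈ Ideal.jacobson (⊥ : Ideal R)) ∧
    (∀ r s : R, ((1 - e) * r * e) * (e * s * (1 - e)) = 0) :=
  primitive_nondivision_corner_general he hprim hnotdiv hVNL
end
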